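/- arXiv:2505.23620 — 6 statements merged into one kernel-verified Lean document; each statement's English description precedes it below -/
import Mathlib

section
/- Let d, n ∈ ℕ with n ≥ 1 and d ≥ 1, and let A be the add-one estimator defined on count vectors x ∈ ℕ^d by A(x)_i = (x_i + 1)/(n + d). Then for every p ∈ Δ(d), if x ∼ Multinomial(n, p), one has E[KL(p‖A(x))] ≤ ln(1 + d/n). -/
open MeasureTheory ProbabilityTheory Real
open scoped ENNReal NNReal

/-- KL divergence between two finite probability vectors, valued in `ℝ≥0∞`:
`+∞` if some `pᵢ > 0 = qᵢ`, and otherwise `∑ pᵢ log (pᵢ / qᵢ)` (summands with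
`pᵢ = 0` contribute `0`). -/
noncomputable def klDiv {d : ℕ} (p q : Fin d → ℝ) : ℝ≥0∞ :=
  if ∀ i, 0 < p i → 0 < q i then
    ENNReal.ofReal (∑ i, if 0 < p i then p i * Real.log (p i / q i) else 0)
  else ⊤

/-- The categorical distribution on `Fin d` with weights `p`. -/
noncomputable def catMeasure {d : ℕ} (p : Fin d → ℝ) : Measure (Fin d) :=
  ∑ i, ENNReal.ofReal (p i) • Measure.dirac i

/-- The multinomial distribution on count vectors in `ℕ^d`: the law of the vector of
counts of `n` i.i.d. samples from the categorical distribution `p` on `{1, …, d}`. -/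
noncomputable def multinomial (d n : ℕ) (p : Fin d → ℝ) : Measure (Fin d → ℕ) :=
  Measure.map (fun s i => (Finset.univ.filter fun t => s t = i).card)
    (Measure.pi fun _ : Fin n => catMeasure p)

/- ### Auxiliary lemmas -/

lemma catMeasure_apply {d : ℕ} (p : Fin d → ℝ) (A : Set (Fin d)) :
    catMeasure p A = ∑ i, ENNReal.ofReal (p i) * A.indicator 1 i := by
  simp [catMeasure, Measure.finset_sum_apply, Measure.dirac_apply]

instance catFinite {d : ℕ} (p : Fin d → ℝ) : IsFiniteMeasure (catMeasure p) := by
  constructor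
  rw [catMeasure_apply]
  refine ENNReal.sum_lt_top.mpr fun i _ => ?_
  exact ENNReal.mul_lt_top ENNReal.ofReal_lt_top
    (by by_cases h : (i:Fin d) ∈ (Set.univ : Set (Fin d)) <;> simp [Set.indicator, h])

lemma pi_cat_eq {d n : ℕ} (p : Fin d → ℝ) :
    Measure.pi (fun _ : Fin n => catMeasure p)
      = ∑ s : Fin n → Fin d, (∏ t, ENNReal.ofReal (p (s t))) • Measure.dirac s := by
  refine Measure.pi_eq fun A hA => ?_
  have : ∀ s : Fin n → Fin d,
      Measure.dirac s (Set.pi Set.univ A) = ∏ t, (A t).indicator (1 : Fin d → ℝ≥0∞) (s t) := by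
    intro s
    rw [Measure.dirac_apply]
    by_cases h : s ∈ Set.pi Set.univ A
    · rw [Set.indicator_of_mem h]
      simp only [Set.mem_pi, Set.mem_univ, forall_true_left] at h
      simp [Set.indicator_of_mem, h]
    · rw [Set.indicator_of_notMem h]
      simp only [Set.mem_pi, Set.mem_univ, forall_true_left, not_forall] at h
      obtain ⟨t, ht⟩ := h
      exact (Finset.prod_eq_zero (Finset.mem_univ t) (by simp [Set.indicator_of_notMem ht])).symm
  simp only [Measure.finset_sum_apply, Measure.smul_apply, smul_eq_mul, this,
    ← Finset.prod_mul_distrib]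
  rw [← Fintype.piFinset_univ,
    show (∑ x ∈ Fintype.piFinset fun _ : Fin n => (Finset.univ : Finset (Fin d)),
        ∏ t, ENNReal.ofReal (p (x t)) * (A t).indicator 1 (x t))
      = ∏ t : Fin n, ∑ j : Fin d, ENNReal.ofReal (p j) * (A t).indicator 1 j from
      (Finset.prod_univ_sum _ fun t j => ENNReal.ofReal (p j) * (A t).indicator 1 j).symm]
  congr 1
  ext t
  rw [catMeasure_apply]

lemma lintegral_multinomial {d n : ℕ} (p : Fin d → ℝ) (f : (Fin d → ℕ) → ℝ≥0∞) :
    ∫⁻ x, f x ∂(multinomial d n p)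
      = ∑ s : Fin n → Fin d, (∏ t, ENNReal.ofReal (p (s t)))
          * f (fun i => (Finset.univ.filter fun t => s t = i).card) := by
  rw [multinomial, lintegral_map (measurable_of_countable f) (measurable_of_countable _),
    pi_cat_eq, lintegral_finset_sum_measure]
  simp [lintegral_smul_measure, lintegral_dirac]

lemma kl_nonneg {d : ℕ} (p q : Fin d → ℝ) (hp : ∀ i, 0 ≤ p i) (hq : ∀ i, 0 < q i)
    (hps : ∑ i, p i = 1) (hqs : ∑ i, q i = 1) :
    0 ≤ ∑ i, if 0 < p i then p i * Real.log (p i / q i) else 0 := by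
  have key : ∀ i, p i - q i ≤ (if 0 < p i then p i * Real.log (p i / q i) else 0) := by
    intro i
    by_cases h : 0 < p i
    · rw [if_pos h]
      have h1 : Real.log (q i / p i) ≤ q i / p i - 1 :=
        Real.log_le_sub_one_of_pos (div_pos (hq i) h)
      have h2 : Real.log (p i / q i) = - Real.log (q i / p i) := by
        rw [← Real.log_inv, inv_div]
      rw [h2]
      have h3 : p i * (q i / p i - 1) = q i - p i := by field_simp
      nlinarith [mul_le_mul_of_nonneg_left h1 h.le]
    · rw [if_neg h]
      have : p i = 0 := le_antisymm (not_lt.mp h) (hp i)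
      rw [this]
      linarith [(hq i).le]
  calc (0:ℝ) = ∑ i, (p i - q i) := by rw [Finset.sum_sub_distrib, hps, hqs]; ring
  _ ≤ _ := Finset.sum_le_sum fun i _ => key i

lemma binom_recip_bound {d n : ℕ} (p : Fin d → ℝ) (hp : ∀ i, 0 ≤ p i)
    (hps : ∑ i, p i = 1) (i : Fin d) (hpi : 0 < p i) :
    ∑ s : Fin n → Fin d, (∏ t, p (s t))
        * (1 / (((Finset.univ.filter fun t => s t = i).card : ℝ) + 1))
      ≤ 1 / (((n : ℝ) + 1) * p i) := by
  have hpile : p i ≤ 1 := hps ▸ Finset.single_le_sum (fun j _ => hp j) (Finset.mem_univ i)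
  have hA : ∀ s : Fin n → Fin d,
      (∏ t, p (s t)) * (1 / (((Finset.univ.filter fun t => s t = i).card : ℝ) + 1))
        = ∫ u in (0:ℝ)..1, (∏ t, p (s t)) * u ^ (Finset.univ.filter fun t => s t = i).card := by
    intro s
    rw [intervalIntegral.integral_const_mul, integral_pow]
    norm_num
  have hB : ∑ s : Fin n → Fin d, (∏ t, p (s t))
        * (1 / (((Finset.univ.filter fun t => s t = i).card : ℝ) + 1))
      = ∫ u in (0:ℝ)..1, ∑ s : Fin n → Fin d,
          (∏ t, p (s t)) * u ^ (Finset.univ.filter fun t => s t = i).card := by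
    rw [intervalIntegral.integral_finset_sum]
    · exact Finset.sum_congr rfl fun s _ => hA s
    · exact fun s _ => (continuous_const.mul (continuous_pow _)).intervalIntegrable _ _
  have hC : ∀ u : ℝ, ∑ s : Fin n → Fin d,
      (∏ t, p (s t)) * u ^ (Finset.univ.filter fun t => s t = i).card
        = (p i * u + (1 - p i)) ^ n := by
    intro u
    have h1 : ∀ s : Fin n → Fin d,
        (∏ t, p (s t)) * u ^ (Finset.univ.filter fun t => s t = i).card
          = ∏ t, (p (s t) * (if s t = i then u else 1)) := by
      intro s
      rw [Finset.prod_mul_distrib, Finset.prod_ite, Finset.prod_const, Finset.prod_const,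
        one_pow, mul_one]
    simp only [h1]
    rw [show (∑ s : Fin n → Fin d, ∏ t, (p (s t) * (if s t = i then u else 1)))
        = ∑ s ∈ Fintype.piFinset fun _ : Fin n => (Finset.univ : Finset (Fin d)),
          ∏ t, (p (s t) * (if s t = i then u else 1)) by rw [Fintype.piFinset_univ],
      show (∑ s ∈ Fintype.piFinset fun _ : Fin n => (Finset.univ : Finset (Fin d)),
          ∏ t, (p (s t) * (if s t = i then u else 1)))
        = ∏ _t : Fin n, ∑ j : Fin d, (p j * (if j = i then u else 1)) from
        (Finset.prod_univ_sum _ fun _t j => p j * (if j = i then u else 1)).symm]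
    have h2 : (∑ j : Fin d, p j * (if j = i then u else 1)) = p i * u + (1 - p i) := by
      have h3 : ∀ j : Fin d, p j * (if j = i then u else 1)
          = p j + (if j = i then p j * (u - 1) else 0) := by
        intro j; split_ifs <;> ring
      simp only [h3, Finset.sum_add_distrib, hps, Finset.sum_ite_eq', Finset.mem_univ, if_pos]
      ring
    rw [h2, Finset.prod_const, Finset.card_univ, Fintype.card_fin]
  simp only [hB, hC]
  rw [show (fun u : ℝ => (p i * u + (1 - p i)) ^ n) = fun u => (fun v => v ^ n) (p i * u + (1 - p i))
      from rfl, intervalIntegral.integral_comp_mul_add (fun v => v ^ n) hpi.ne' (1 - p i),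
    integral_pow]
  have hb : (1 : ℝ) - p i ≥ 0 := by linarith
  have hpow : (0:ℝ) ≤ (1 - p i) ^ (n + 1) := pow_nonneg hb _
  have hlhs : p i * 0 + (1 - p i) = 1 - p i := by ring
  have hrhs : p i * 1 + (1 - p i) = 1 := by ring
  rw [hlhs, hrhs, smul_eq_mul, one_pow]
  calc (p i)⁻¹ * ((1 - (1 - p i) ^ (n + 1)) / ((n:ℝ) + 1))
      ≤ (p i)⁻¹ * (1 / ((n:ℝ) + 1)) := by
        gcongr
        linarith
    _ = 1 / (((n:ℝ) + 1) * p i) := by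
        field_simp

lemma count_sum {d n : ℕ} (s : Fin n → Fin d) :
    ∑ i, ((Finset.univ.filter fun t => s t = i).card : ℝ) = n := by
  have := Finset.card_eq_sum_card_fiberwise
    (f := s) (s := Finset.univ) (t := Finset.univ) (fun x _ => Finset.mem_univ (s x))
  rw [Finset.card_univ, Fintype.card_fin] at this
  exact_mod_cast this.symm

lemma weight_sum {d n : ℕ} (p : Fin d → ℝ) (hps : ∑ i, p i = 1) :
    ∑ s : Fin n → Fin d, ∏ t, p (s t) = 1 := by
  rw [show (∑ s : Fin n → Fin d, ∏ t, p (s t))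
      = ∑ s ∈ Fintype.piFinset fun _ : Fin n => (Finset.univ : Finset (Fin d)),
        ∏ t, p (s t) by rw [Fintype.piFinset_univ],
    show (∑ s ∈ Fintype.piFinset fun _ : Fin n => (Finset.univ : Finset (Fin d)),
        ∏ t, p (s t))
      = ∏ _t : Fin n, ∑ j : Fin d, p j from
      (Finset.prod_univ_sum _ fun _t j => p j).symm]
  simp [hps]

/-- **Minimax upper bound for the add-one estimator** (non-private): for every
`p ∈ Δ(d)` and `x ∼ Multinomial(n, p)`,
`E[KL(p ‖ (x + 1)/(n + d))] ≤ ln (1 + d/n)`. -/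
theorem addOne_KL_upper_bound (d n : ℕ) (hd : 1 ≤ d) (hn : 1 ≤ n)
    (p : Fin d → ℝ) (hp : ∀ i, 0 ≤ p i) (hps : ∑ i, p i = 1) :
    ∫⁻ x, klDiv p (fun i => ((x i : ℝ) + 1) / ((n : ℝ) + d)) ∂(multinomial d n p)
      ≤ ENNReal.ofReal (Real.log (1 + (d : ℝ) / n)) := by
  have hn' : (0:ℝ) < n := by exact_mod_cast hn
  have hd' : (0:ℝ) < d := by exact_mod_cast hd
  have hnd : (0:ℝ) < (n:ℝ) + d := by linarith
  have hd1 : (1:ℝ) ≤ d := by exact_mod_cast hd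
  set c : (Fin n → Fin d) → Fin d → ℕ :=
    fun s i => (Finset.univ.filter fun t => s t = i).card with hc
  set g : (Fin d → ℕ) → ℝ :=
    fun x => ∑ i, if 0 < p i then p i * Real.log (p i / (((x i : ℝ) + 1) / ((n:ℝ) + d))) else 0
    with hg
  set w : (Fin n → Fin d) → ℝ := fun s => ∏ t, p (s t) with hwdef
  have hw0 : ∀ s, 0 ≤ w s := fun s => Finset.prod_nonneg fun t _ => hp (s t)
  have hw1 : ∑ s : Fin n → Fin d, w s = 1 := weight_sum p hps
  -- klDiv evaluates to ofReal g
  have hkl : ∀ x : Fin d → ℕ,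
      klDiv p (fun i => ((x i : ℝ) + 1) / ((n : ℝ) + d)) = ENNReal.ofReal (g x) := by
    intro x
    rw [klDiv, if_pos]
    intro i _
    positivity
  -- g is nonneg on counts
  have hq1 : ∀ s : Fin n → Fin d, ∑ i, (((c s i : ℝ)) + 1) / ((n:ℝ) + d) = 1 := by
    intro s
    rw [← Finset.sum_div, Finset.sum_add_distrib, count_sum s]
    simp
    exact hnd.ne'
  have hg0 : ∀ s : Fin n → Fin d, 0 ≤ g (c s) := by
    intro s
    exact kl_nonneg p (fun i => (((c s i : ℝ)) + 1) / ((n:ℝ) + d)) hp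
      (fun i => by positivity) hps (hq1 s)
  -- compute the lintegral
  rw [show (fun x : Fin d → ℕ => klDiv p fun i => ((x i : ℝ) + 1) / ((n : ℝ) + d))
      = fun x => ENNReal.ofReal (g x) from funext hkl] at *
  rw [lintegral_multinomial]
  have hprod : ∀ s : Fin n → Fin d,
      (∏ t, ENNReal.ofReal (p (s t))) = ENNReal.ofReal (w s) := by
    intro s
    rw [hwdef]
    exact (ENNReal.ofReal_prod_of_nonneg fun t _ => hp (s t)).symm
  simp only [hprod]
  have hmul : ∀ s : Fin n → Fin d,
      ENNReal.ofReal (w s) * ENNReal.ofReal (g (c s)) = ENNReal.ofReal (w s * g (c s)) :=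
    fun s => (ENNReal.ofReal_mul (hw0 s)).symm
  calc ∑ s : Fin n → Fin d, ENNReal.ofReal (w s) * ENNReal.ofReal (g (c s))
      = ENNReal.ofReal (∑ s : Fin n → Fin d, w s * g (c s)) := by
        rw [ENNReal.ofReal_sum_of_nonneg fun s _ => mul_nonneg (hw0 s) (hg0 s)]
        exact Finset.sum_congr rfl fun s _ => hmul s
    _ ≤ ENNReal.ofReal (Real.log (1 + (d : ℝ) / n)) := by
        apply ENNReal.ofReal_le_ofReal
        -- the main real inequality
        set C := Real.log (((n:ℝ) + d) / ((n:ℝ) + 1)) with hCdef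
        have hC0 : 0 ≤ C := Real.log_nonneg ((one_le_div (by linarith)).mpr (by linarith))
        have swap : ∑ s : Fin n → Fin d, w s * g (c s)
            = ∑ i, ∑ s : Fin n → Fin d, w s *
              (if 0 < p i then p i * Real.log (p i / (((c s i : ℝ) + 1) / ((n:ℝ) + d))) else 0) := by
          simp only [hg, Finset.mul_sum]
          exact Finset.sum_comm
        rw [swap]
        have keyi : ∀ i : Fin d, (∑ s : Fin n → Fin d, w s *
              (if 0 < p i then p i * Real.log (p i / (((c s i : ℝ) + 1) / ((n:ℝ) + d))) else 0))
            ≤ (if 0 < p i then p i else 0) * C := by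
          intro i
          by_cases hi : 0 < p i
          · simp only [if_pos hi]
            set y : (Fin n → Fin d) → ℝ := fun s => p i * ((n:ℝ) + d) / ((c s i : ℝ) + 1)
              with hydef
            have hyz : ∀ s : Fin n → Fin d,
                p i / (((c s i : ℝ) + 1) / ((n:ℝ) + d)) = y s := by
              intro s; rw [hydef, div_div_eq_mul_div]
            have hypos : ∀ s : Fin n → Fin d, y s ∈ Set.Ioi (0:ℝ) := by
              intro s
              have : (0:ℝ) < (c s i : ℝ) + 1 := by positivity
              exact Set.mem_Ioi.mpr (div_pos (by positivity) this)
            have jensen := (strictConcaveOn_log_Ioi.concaveOn).le_map_sum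
              (t := Finset.univ) (w := w) (p := y) (fun s _ => hw0 s) hw1 (fun s _ => hypos s)
            simp only [smul_eq_mul] at jensen
            have hsum_le : ∑ s : Fin n → Fin d, w s * y s ≤ ((n:ℝ) + d) / ((n:ℝ) + 1) := by
              have h1 : ∀ s : Fin n → Fin d, w s * y s
                  = (p i * ((n:ℝ) + d)) * (w s * (1 / ((c s i : ℝ) + 1))) := by
                intro s; rw [hydef]; ring
              rw [show (∑ s : Fin n → Fin d, w s * y s)
                  = (p i * ((n:ℝ) + d)) * ∑ s : Fin n → Fin d, w s * (1 / ((c s i : ℝ) + 1)) by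
                rw [Finset.mul_sum]; exact Finset.sum_congr rfl fun s _ => h1 s]
              calc (p i * ((n:ℝ) + d)) * ∑ s : Fin n → Fin d, w s * (1 / ((c s i : ℝ) + 1))
                  ≤ (p i * ((n:ℝ) + d)) * (1 / (((n:ℝ) + 1) * p i)) := by
                    exact mul_le_mul_of_nonneg_left (binom_recip_bound p hp hps i hi)
                      (by positivity)
                _ = ((n:ℝ) + d) / ((n:ℝ) + 1) := by field_simp
            have hsum_pos : 0 < ∑ s : Fin n → Fin d, w s * y s := by
              obtain ⟨s0, _, hs0⟩ := Finset.exists_ne_zero_of_sum_ne_zero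
                (hw1 ▸ (one_ne_zero : (1:ℝ) ≠ 0))
              exact Finset.sum_pos' (fun s _ => mul_nonneg (hw0 s) (hypos s).le)
                ⟨s0, Finset.mem_univ s0,
                  mul_pos ((hw0 s0).lt_of_ne (Ne.symm hs0)) (hypos s0)⟩
            have hlog : Real.log (∑ s : Fin n → Fin d, w s * y s) ≤ C :=
              hCdef ▸ Real.log_le_log hsum_pos hsum_le
            calc ∑ s : Fin n → Fin d, w s * (p i * Real.log (p i / (((c s i : ℝ) + 1) / ((n:ℝ) + d))))
                = p i * ∑ s : Fin n → Fin d, w s * Real.log (y s) := by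
                  rw [Finset.mul_sum]
                  exact Finset.sum_congr rfl fun s _ => by rw [hyz s]; ring
              _ ≤ p i * C := by
                  apply mul_le_mul_of_nonneg_left _ hi.le
                  exact le_trans jensen hlog
          · simp [hi]
        calc ∑ i, ∑ s : Fin n → Fin d, w s *
              (if 0 < p i then p i * Real.log (p i / (((c s i : ℝ) + 1) / ((n:ℝ) + d))) else 0)
            ≤ ∑ i, (if 0 < p i then p i else 0) * C := Finset.sum_le_sum fun i _ => keyi i
          _ = C := by
              rw [← Finset.sum_mul,
                show (∑ i, if 0 < p i then p i else 0) = ∑ i, p i from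
                  Finset.sum_congr rfl fun i _ => by
                    by_cases h : 0 < p i
                    · rw [if_pos h]
                    · rw [if_neg h, le_antisymm (not_lt.mp h) (hp i)],
                hps, one_mul]
          _ ≤ Real.log (1 + (d:ℝ) / n) := by
              rw [show (1 + (d:ℝ) / n) = ((n:ℝ) + d) / n by field_simp]
              refine Real.log_le_log (by positivity) ?_
              gcongr
              norm_num
end

section
/- (Generalized packing argument.) Let d ≥ 16 and m ≥ 1 be integers, let O be a measurable space, and let err : O × O → [0,∞) be a measurable function. Let p^1,…,p^d ∈ O and for each i ∈ {1,…,d} let S_i be a probability measure on ℕ^m. Let ε > 0 and 0 ≤ δ < ε/(d^{1/4}·ln d). Assume: (1) for all i, j ∈ {1,…,d} there exists a coupling (x, x') of S_i and S_j with E[Σ_{l=1}^m |x_l − x'_l|] ≤ ln(d)/(16·ε); and (2) for every q ∈ O and every subset S ⊆ {1,…,d} with |S| ≥ d^{1/4}, (1/|S|)·Σ_{i∈S} err(p^i, q) ≥ ln(d)/4. Then for every (ε,δ)-differentially private Markov kernel A from ℕ^m to probability measures on O, there exists i ∈ {1,…,d} with E_{x∼S_i} E_{v∼A(x)}[err(p^i,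 v)] ≥ ln(d)/16. -/
open MeasureTheory ProbabilityTheory Real
open scoped ENNReal NNReal

lemma gp_aux {O : Type*} [MeasurableSpace O] {m : ℕ}
    (ε δ : ℝ) (hε : 0 ≤ ε) (A : (Fin m → ℕ) → Measure O)
    (hDP : ∀ x x' : Fin m → ℕ, (∑ l, ((x l : ℤ) - x' l).natAbs) ≤ 1 →
      ∀ T : Set O, MeasurableSet T →
        A x T ≤ ENNReal.ofReal (Real.exp ε) * A x' T + ENNReal.ofReal δ) :
    ∀ (k : ℕ) (x x' : Fin m → ℕ), (∑ l, ((x l : ℤ) - x' l).natAbs) = k →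
      ∀ T : Set O, MeasurableSet T →
        A x T ≤ ENNReal.ofReal (Real.exp (k * ε)) * A x' T
          + (k : ℝ≥0∞) * ENNReal.ofReal (Real.exp (k * ε)) * ENNReal.ofReal δ := by
  intro k
  induction k with
  | zero =>
    intro x x' hsum T hT
    have hx : x = x' := by
      funext l
      have h0 : ((x l : ℤ) - x' l).natAbs = 0 :=
        Finset.sum_eq_zero_iff.mp hsum l (Finset.mem_univ l)
      omega
    subst hx; simp
  | succ k ih =>
    intro x x' hsum T hT
    have hex : ∃ l₀, x l₀ ≠ x' l₀ := by
      by_contra hno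
      push_neg at hno
      simp [hno] at hsum
    obtain ⟨l₀, hl₀⟩ := hex
    set n : ℕ := if x l₀ < x' l₀ then x l₀ + 1 else x l₀ - 1 with hn
    set x'' := Function.update x l₀ n with hx''
    have hxx : ∀ l, l ≠ l₀ → x'' l = x l := fun l hl => Function.update_of_ne hl _ _
    have hxl₀ : x'' l₀ = n := Function.update_self _ _ _
    have hstep : ((x l₀ : ℤ) - x'' l₀).natAbs = 1 := by
      rw [hxl₀, hn]; split_ifs with h <;> omega
    have hdrop : ((x'' l₀ : ℤ) - x' l₀).natAbs + 1 = ((x l₀ : ℤ) - x' l₀).natAbs := by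
      rw [hxl₀, hn]; split_ifs with h <;> omega
    have dist1 : (∑ l, ((x l : ℤ) - x'' l).natAbs) = 1 := by
      rw [Finset.sum_eq_single l₀]
      · exact hstep
      · intro l _ hl; rw [hxx l hl]; omega
      · intro h; exact absurd (Finset.mem_univ l₀) h
    have dist2 : (∑ l, ((x'' l : ℤ) - x' l).natAbs) = k := by
      have e1 := Finset.sum_erase_add Finset.univ
        (fun l => ((x l : ℤ) - x' l).natAbs) (Finset.mem_univ l₀)
      have e2 := Finset.sum_erase_add Finset.univ
        (fun l => ((x'' l : ℤ) - x' l).natAbs) (Finset.mem_univ l₀)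
      have hcong : ∑ l ∈ Finset.univ.erase l₀, ((x'' l : ℤ) - x' l).natAbs
          = ∑ l ∈ Finset.univ.erase l₀, ((x l : ℤ) - x' l).natAbs := by
        refine Finset.sum_congr rfl fun l hl => ?_
        rw [hxx l (Finset.ne_of_mem_erase hl)]
      omega
    have h1 : A x T ≤ ENNReal.ofReal (Real.exp ε) * A x'' T + ENNReal.ofReal δ :=
      hDP x x'' (by rw [dist1]) T hT
    have h2 := ih x'' x' dist2 T hT
    have hEE : ENNReal.ofReal (Real.exp ε) * ENNReal.ofReal (Real.exp ((k : ℝ) * ε))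
        = ENNReal.ofReal (Real.exp (((k + 1 : ℕ) : ℝ) * ε)) := by
      rw [← ENNReal.ofReal_mul (Real.exp_nonneg _), ← Real.exp_add]
      congr 1; push_cast; ring
    have hE1 : (1 : ℝ≥0∞) ≤ ENNReal.ofReal (Real.exp (((k + 1 : ℕ) : ℝ) * ε)) := by
      rw [ENNReal.one_le_ofReal]
      exact Real.one_le_exp (by positivity)
    calc A x T ≤ ENNReal.ofReal (Real.exp ε) * A x'' T + ENNReal.ofReal δ := h1
      _ ≤ ENNReal.ofReal (Real.exp ε) *
            (ENNReal.ofReal (Real.exp ((k : ℝ) * ε)) * A x' T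
              + (k : ℝ≥0∞) * ENNReal.ofReal (Real.exp ((k : ℝ) * ε)) * ENNReal.ofReal δ)
            + ENNReal.ofReal δ := by gcongr
      _ = (ENNReal.ofReal (Real.exp ε) * ENNReal.ofReal (Real.exp ((k : ℝ) * ε))) * A x' T
            + ((k : ℝ≥0∞) * (ENNReal.ofReal (Real.exp ε) * ENNReal.ofReal (Real.exp ((k : ℝ) * ε)))
                * ENNReal.ofReal δ + ENNReal.ofReal δ) := by ring
      _ = ENNReal.ofReal (Real.exp (((k + 1 : ℕ) : ℝ) * ε)) * A x' T
            + ((k : ℝ≥0∞) * ENNReal.ofReal (Real.exp (((k + 1 : ℕ) : ℝ) * ε)) * ENNReal.ofReal δ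
                + ENNReal.ofReal δ) := by rw [hEE]
      _ ≤ ENNReal.ofReal (Real.exp (((k + 1 : ℕ) : ℝ) * ε)) * A x' T
            + ((k + 1 : ℕ) : ℝ≥0∞) * ENNReal.ofReal (Real.exp (((k + 1 : ℕ) : ℝ) * ε))
                * ENNReal.ofReal δ := by
          refine add_le_add le_rfl ?_
          have hc : ((k + 1 : ℕ) : ℝ≥0∞) = (k : ℝ≥0∞) + 1 := by push_cast; ring
          rw [hc]
          have hd : ((k : ℝ≥0∞) + 1) * ENNReal.ofReal (Real.exp (((k + 1 : ℕ) : ℝ) * ε))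
              * ENNReal.ofReal δ
              = (k : ℝ≥0∞) * ENNReal.ofReal (Real.exp (((k + 1 : ℕ) : ℝ) * ε)) * ENNReal.ofReal δ
                + ENNReal.ofReal (Real.exp (((k + 1 : ℕ) : ℝ) * ε)) * ENNReal.ofReal δ := by ring
          rw [hd]
          exact add_le_add le_rfl (le_mul_of_one_le_left zero_le hE1)

/-- **Generalized packing argument**: under a coupling closeness condition on the data
distributions and a packing-type separation condition on the error function, every
`(ε,δ)`-differentially private mechanism incurs error at least `ln(d)/16` on some
instance. -/
theorem generalized_packing
    {O : Type*} [MeasurableSpace O]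
    (d m : ℕ) (hd : 16 ≤ d) (hm : 1 ≤ m)
    (err : O → O → ℝ)
    (herr_nonneg : ∀ a b, 0 ≤ err a b)
    (herr_meas : Measurable fun pr : O × O => err pr.1 pr.2)
    (p : Fin d → O)
    (S : Fin d → Measure (Fin m → ℕ))
    (hS : ∀ i, IsProbabilityMeasure (S i))
    (ε δ : ℝ) (hε : 0 < ε) (hδ0 : 0 ≤ δ)
    (hδ : δ < ε / ((d : ℝ) ^ ((1 : ℝ) / 4) * Real.log d))
    -- condition (1): couplings with small expected ℓ₁ distance
    (hcouple : ∀ i j : Fin d,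
      ∃ μ : Measure ((Fin m → ℕ) × (Fin m → ℕ)),
        IsProbabilityMeasure μ ∧
        μ.map Prod.fst = S i ∧
        μ.map Prod.snd = S j ∧
        ∫⁻ z, (∑ l, ((((z.1 l : ℤ) - z.2 l).natAbs : ℕ) : ℝ≥0∞)) ∂μ
          ≤ ENNReal.ofReal (Real.log d / (16 * ε)))
    -- condition (2): packing separation on every moderately large subset
    (hpack : ∀ q : O, ∀ Sset : Finset (Fin d),
      (d : ℝ) ^ ((1 : ℝ) / 4) ≤ Sset.card →
      Real.log d / 4 ≤ (1 / (Sset.card : ℝ)) * ∑ i ∈ Sset, err (p i) q)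
    (A : (Fin m → ℕ) → Measure O)
    (hA : ∀ x, IsProbabilityMeasure (A x))
    (hDP : ∀ x x' : Fin m → ℕ, (∑ l, ((x l : ℤ) - x' l).natAbs) ≤ 1 →
      ∀ T : Set O, MeasurableSet T →
        A x T ≤ ENNReal.ofReal (Real.exp ε) * A x' T + ENNReal.ofReal δ) :
    ∃ i : Fin d,
      ENNReal.ofReal (Real.log d / 16) ≤
        ∫⁻ x, ∫⁻ v, ENNReal.ofReal (err (p i) v) ∂(A x) ∂(S i) := by
  by_contra hcon
  push_neg at hcon
  -- basic notation and facts
  set L : ℝ := Real.log d with hLdef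
  have hd1 : (1 : ℝ) < d := by exact_mod_cast lt_of_lt_of_le (by norm_num) hd
  have hdpos : (0 : ℝ) < d := by linarith
  have hL : 0 < L := Real.log_pos hd1
  set D : ℝ := (d : ℝ) ^ ((1 : ℝ) / 4) with hDdef
  have hDpos : 0 < D := Real.rpow_pos_of_pos hdpos _
  have hD2 : (2 : ℝ) ≤ D := by
    have h16 : ((16 : ℝ)) ^ ((1 : ℝ) / 4) = 2 := by
      rw [show (16 : ℝ) = 2 ^ (4 : ℕ) by norm_num, ← Real.rpow_natCast 2 4,
        ← Real.rpow_mul (by norm_num)]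
      norm_num
    calc (2 : ℝ) = (16 : ℝ) ^ ((1 : ℝ) / 4) := h16.symm
      _ ≤ D := by
        apply Real.rpow_le_rpow (by norm_num) (by exact_mod_cast hd) (by norm_num)
  have hexpD : Real.exp (L / 4) = D := by
    rw [hDdef, Real.rpow_def_of_pos hdpos]
    congr 1; rw [hLdef]; ring
  -- all sets / functions on the (countable) data spaces are measurable
  have measN : ∀ (f : (Fin m → ℕ) → ℝ≥0∞), Measurable f :=
    fun f s _ => (f ⁻¹' s).to_countable.measurableSet
  have measN2 : ∀ (f : (Fin m → ℕ) × (Fin m → ℕ) → ℝ≥0∞), Measurable f :=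
    fun f s _ => (f ⁻¹' s).to_countable.measurableSet
  -- good events
  set T : Fin d → Set O := fun i => {v | err (p i) v < L / 4} with hTdef
  have herri : ∀ i, Measurable fun v => err (p i) v := fun i =>
    herr_meas.comp (measurable_const.prodMk measurable_id)
  have hT : ∀ i, MeasurableSet (T i) := fun i =>
    measurableSet_lt (herri i) measurable_const
  -- Step A : small bad probability under S i
  have hA1 : ∀ i, ∫⁻ x, A x (T i)ᶜ ∂(S i) < ENNReal.ofReal (1 / 4) := by
    intro i
    have hpt : ∀ x, ENNReal.ofReal (L / 4) * A x (T i)ᶜ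
        ≤ ∫⁻ v, ENNReal.ofReal (err (p i) v) ∂(A x) := by
      intro x
      calc ENNReal.ofReal (L / 4) * A x (T i)ᶜ
          = ∫⁻ _ in (T i)ᶜ, ENNReal.ofReal (L / 4) ∂(A x) := by
            rw [setLIntegral_const]
        _ ≤ ∫⁻ v in (T i)ᶜ, ENNReal.ofReal (err (p i) v) ∂(A x) := by
            refine setLIntegral_mono ((herri i).ennreal_ofReal) fun v hv => ?_
            have : ¬ err (p i) v < L / 4 := hv
            exact ENNReal.ofReal_le_ofReal (by linarith [this])
        _ ≤ ∫⁻ v, ENNReal.ofReal (err (p i) v) ∂(A x) := setLIntegral_le_lintegral _ _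
    have hmul : ENNReal.ofReal (L / 4) * ∫⁻ x, A x (T i)ᶜ ∂(S i)
        < ENNReal.ofReal (L / 16) := by
      calc ENNReal.ofReal (L / 4) * ∫⁻ x, A x (T i)ᶜ ∂(S i)
          = ∫⁻ x, ENNReal.ofReal (L / 4) * A x (T i)ᶜ ∂(S i) := by
            rw [lintegral_const_mul _ (measN _)]
        _ ≤ ∫⁻ x, ∫⁻ v, ENNReal.ofReal (err (p i) v) ∂(A x) ∂(S i) :=
            lintegral_mono hpt
        _ < ENNReal.ofReal (L / 16) := hcon i
    by_contra hge
    push_neg at hge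
    have : ENNReal.ofReal (L / 16) ≤ ENNReal.ofReal (L / 4) * ∫⁻ x, A x (T i)ᶜ ∂(S i) := by
      calc ENNReal.ofReal (L / 16) = ENNReal.ofReal (L / 4) * ENNReal.ofReal (1 / 4) := by
            rw [← ENNReal.ofReal_mul (by positivity)]; congr 1; ring
        _ ≤ ENNReal.ofReal (L / 4) * ∫⁻ x, A x (T i)ᶜ ∂(S i) := by gcongr
    exact absurd hmul (not_lt.mpr this)
  -- Step A' : large good probability under S i
  have hA2 : ∀ i, ENNReal.ofReal (3 / 4) < ∫⁻ x, A x (T i) ∂(S i) := by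
    intro i
    have hsum : (∫⁻ x, A x (T i) ∂(S i)) + ∫⁻ x, A x (T i)ᶜ ∂(S i) = 1 := by
      rw [← lintegral_add_left (measN _)]
      have : ∀ x, A x (T i) + A x (T i)ᶜ = 1 := fun x => by
        rw [measure_add_measure_compl (hT i), measure_univ]
      simp only [this]
      simp [lintegral_const]
    by_contra hle
    push_neg at hle
    have : (1 : ℝ≥0∞) < ENNReal.ofReal (3 / 4) + ENNReal.ofReal (1 / 4) := by
      rw [← hsum]
      exact ENNReal.add_lt_add_of_le_of_lt
        (ne_top_of_le_ne_top ENNReal.ofReal_ne_top hle) hle (hA1 i)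
    rw [← ENNReal.ofReal_add (by norm_num) (by norm_num)] at this
    norm_num at this
  -- the reference index
  have hd0 : 0 < d := by omega
  set i0 : Fin d := ⟨0, hd0⟩ with hi0
  set P0 : Fin d → ℝ≥0∞ := fun i => ∫⁻ x', A x' (T i) ∂(S i0) with hP0def
  -- Step B+C : transfer through the coupling
  have hP : ∀ i, ENNReal.ofReal (1 / (4 * D)) < P0 i := by
    intro i
    obtain ⟨μ, hμprob, hfst, hsnd, hμdist⟩ := hcouple i i0
    set K : (Fin m → ℕ) × (Fin m → ℕ) → ℕ :=
      fun z => ∑ l, ((z.1 l : ℤ) - z.2 l).natAbs with hKdef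
    set Bad : Set ((Fin m → ℕ) × (Fin m → ℕ)) := {z | L / (4 * ε) < (K z : ℝ)} with hBaddef
    have hBadMeas : MeasurableSet Bad := Bad.to_countable.measurableSet
    have hKint : ∫⁻ z, (K z : ℝ≥0∞) ∂μ ≤ ENNReal.ofReal (L / (16 * ε)) := by
      calc ∫⁻ z, (K z : ℝ≥0∞) ∂μ
          = ∫⁻ z, (∑ l, ((((z.1 l : ℤ) - z.2 l).natAbs : ℕ) : ℝ≥0∞)) ∂μ := by
            refine lintegral_congr fun z => ?_
            rw [hKdef]; push_cast; ring
        _ ≤ ENNReal.ofReal (L / (16 * ε)) := hμdist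
    have hBad : μ Bad ≤ ENNReal.ofReal (1 / 4) := by
      have hmark : ENNReal.ofReal (L / (4 * ε)) * μ Bad ≤ ∫⁻ z, (K z : ℝ≥0∞) ∂μ := by
        calc ENNReal.ofReal (L / (4 * ε)) * μ Bad
            = ∫⁻ _ in Bad, ENNReal.ofReal (L / (4 * ε)) ∂μ := by rw [setLIntegral_const]
          _ ≤ ∫⁻ z in Bad, (K z : ℝ≥0∞) ∂μ := by
              refine setLIntegral_mono (measN2 _) fun z hz => ?_
              have hz' : L / (4 * ε) < (K z : ℝ) := hz
              calc ENNReal.ofReal (L / (4 * ε)) ≤ ENNReal.ofReal (K z : ℝ) :=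
                    ENNReal.ofReal_le_ofReal hz'.le
                _ = (K z : ℝ≥0∞) := ENNReal.ofReal_natCast _
          _ ≤ ∫⁻ z, (K z : ℝ≥0∞) ∂μ := setLIntegral_le_lintegral _ _
      by_contra hgt
      push_neg at hgt
      have h1 : ENNReal.ofReal (L / (16 * ε)) < ENNReal.ofReal (L / (4 * ε)) * μ Bad := by
        calc ENNReal.ofReal (L / (16 * ε))
            = ENNReal.ofReal (L / (4 * ε)) * ENNReal.ofReal (1 / 4) := by
              rw [← ENNReal.ofReal_mul (by positivity)]
              congr 1; ring
          _ < ENNReal.ofReal (L / (4 * ε)) * μ Bad := by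
              refine ENNReal.mul_lt_mul_right ?_ (by finiteness) hgt
              simp [ENNReal.ofReal_eq_zero, not_le]
              positivity
      exact absurd (le_trans hmark hKint) (not_le.mpr h1)
    set c : ℝ := D * (L / (4 * ε)) * δ with hcdef
    have hc : c ≤ 1 / 4 := by
      have hden : 0 < D * L := by positivity
      have hδ' : δ * (D * L) < ε := by
        rw [lt_div_iff₀ hden] at hδ; linarith
      have h1 : D * (L / (4 * ε)) * δ = (δ * (D * L)) / (4 * ε) := by
        field_simp <;> ring
      rw [hcdef, h1, div_le_iff₀ (by positivity : (0:ℝ) < 4 * ε)]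
      nlinarith [hδ']
    -- pointwise domination
    have hpt : ∀ z, A z.1 (T i)
        ≤ Bad.indicator (fun _ => (1 : ℝ≥0∞)) z
          + ENNReal.ofReal D * A z.2 (T i) + ENNReal.ofReal c := by
      intro z
      by_cases hz : z ∈ Bad
      · rw [Set.indicator_of_mem hz]
        calc A z.1 (T i) ≤ 1 := prob_le_one
          _ ≤ 1 + ENNReal.ofReal D * A z.2 (T i) + ENNReal.ofReal c := by
            exact le_add_right (le_add_right le_rfl)
      · rw [Set.indicator_of_notMem hz, zero_add]
        have hzK : (K z : ℝ) ≤ L / (4 * ε) := by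
          have := hz
          rw [hBaddef] at this
          simpa using not_lt.mp this
        have hgp := gp_aux ε δ hε.le A hDP (K z) z.1 z.2 rfl (T i) (hT i)
        have hKε : (K z : ℝ) * ε ≤ L / 4 := by
          calc (K z : ℝ) * ε ≤ L / (4 * ε) * ε :=
                mul_le_mul_of_nonneg_right hzK hε.le
            _ = L / 4 := by field_simp <;> ring
        have hexp : Real.exp ((K z : ℝ) * ε) ≤ D := by
          rw [← hexpD]
          exact Real.exp_le_exp.mpr hKε
        refine le_trans hgp ?_
        have h1 : ENNReal.ofReal (Real.exp ((K z : ℝ) * ε)) * A z.2 (T i)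
            ≤ ENNReal.ofReal D * A z.2 (T i) :=
          mul_le_mul_left (ENNReal.ofReal_le_ofReal hexp) _
        have h2 : (K z : ℝ≥0∞) * ENNReal.ofReal (Real.exp ((K z : ℝ) * ε)) * ENNReal.ofReal δ
            ≤ ENNReal.ofReal c := by
          rw [← ENNReal.ofReal_natCast (K z), ← ENNReal.ofReal_mul (by positivity),
            ← ENNReal.ofReal_mul (by positivity)]
          apply ENNReal.ofReal_le_ofReal
          rw [hcdef]
          have hKnn : (0:ℝ) ≤ (K z : ℝ) := Nat.cast_nonneg _
          have h3 : (K z : ℝ) * Real.exp ((K z : ℝ) * ε) ≤ (L / (4 * ε)) * D :=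
            mul_le_mul hzK hexp (Real.exp_pos _).le (by positivity)
          have h4 := mul_le_mul_of_nonneg_right h3 hδ0
          nlinarith [h4]
        exact add_le_add h1 h2
    -- integrate
    have hmain : ENNReal.ofReal (3 / 4)
        < μ Bad + ENNReal.ofReal D * P0 i + ENNReal.ofReal c := by
      calc ENNReal.ofReal (3 / 4) < ∫⁻ x, A x (T i) ∂(S i) := hA2 i
        _ = ∫⁻ z, A z.1 (T i) ∂μ := by
            rw [← hfst, lintegral_map (measN _) measurable_fst]
        _ ≤ ∫⁻ z, (Bad.indicator (fun _ => (1 : ℝ≥0∞)) z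
              + ENNReal.ofReal D * A z.2 (T i) + ENNReal.ofReal c) ∂μ :=
            lintegral_mono hpt
        _ = μ Bad + ENNReal.ofReal D * (∫⁻ z, A z.2 (T i) ∂μ) + ENNReal.ofReal c := by
            rw [lintegral_add_right _ (by exact measurable_const),
              lintegral_add_left (by exact (measurable_one.indicator hBadMeas)),
              lintegral_indicator hBadMeas, setLIntegral_one,
              lintegral_const_mul _ (measN2 _), lintegral_const]
            simp
        _ = μ Bad + ENNReal.ofReal D * P0 i + ENNReal.ofReal c := by
            have hsnd' : P0 i = ∫⁻ z, A z.2 (T i) ∂μ := by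
              rw [hP0def]
              simp only []
              rw [← hsnd, lintegral_map (measN _) measurable_snd]
            rw [hsnd']
    by_contra hno
    push_neg at hno
    have hDP0 : ENNReal.ofReal D * P0 i ≤ ENNReal.ofReal (1 / 4) := by
      calc ENNReal.ofReal D * P0 i ≤ ENNReal.ofReal D * ENNReal.ofReal (1 / (4 * D)) := by
            gcongr
        _ = ENNReal.ofReal (D * (1 / (4 * D))) := by
            rw [← ENNReal.ofReal_mul hDpos.le]
        _ = ENNReal.ofReal (1 / 4) := by
            congr 1; field_simp <;> ring
    have : ENNReal.ofReal (3 / 4)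
        < ENNReal.ofReal (1 / 4) + ENNReal.ofReal (1 / 4) + ENNReal.ofReal (1 / 4) := by
      refine lt_of_lt_of_le hmain ?_
      exact add_le_add (add_le_add hBad hDP0) (ENNReal.ofReal_le_ofReal hc)
    rw [← ENNReal.ofReal_add (by norm_num) (by norm_num),
      ← ENNReal.ofReal_add (by norm_num) (by norm_num)] at this
    norm_num at this
  -- Step D : packing bound
  have hcount : ∀ v : O, (∑ i : Fin d, (T i).indicator (fun _ => (1 : ℝ≥0∞)) v)
      ≤ ENNReal.ofReal D := by
    intro v
    set F : Finset (Fin d) := Finset.univ.filter (fun i => v ∈ T i) with hF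
    have hsum : (∑ i : Fin d, (T i).indicator (fun _ => (1 : ℝ≥0∞)) v) = (F.card : ℝ≥0∞) := by
      rw [hF, ← Finset.sum_boole]
      refine Finset.sum_congr rfl fun i _ => ?_
      by_cases hv : v ∈ T i <;> simp [Set.indicator, hv]
    rw [hsum]
    have hcard : (F.card : ℝ) < D := by
      by_contra hge
      push_neg at hge
      have hpk := hpack v F hge
      have hne : F.Nonempty := by
        rw [← Finset.card_pos]
        by_contra h0
        push_neg at h0
        have hz : F.card = 0 := by omega
        rw [hz] at hge
        norm_num at hge
        linarith [hDpos]
      have hlt : ∑ i ∈ F, err (p i) v < F.card * (L / 4) := by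
        have := Finset.sum_lt_sum_of_nonempty hne
          (f := fun i => err (p i) v) (g := fun _ => L / 4) ?_
        · simpa [Finset.sum_const, nsmul_eq_mul] using this
        · intro i hi
          have : v ∈ T i := (Finset.mem_filter.mp hi).2
          exact this
      have hcpos : (0:ℝ) < F.card := by
        exact_mod_cast Finset.card_pos.mpr hne
      have : (1 / (F.card : ℝ)) * ∑ i ∈ F, err (p i) v < L / 4 := by
        rw [one_div, inv_mul_lt_iff₀ hcpos]
        linarith [hlt]
      linarith [hpk]
    calc (F.card : ℝ≥0∞) = ENNReal.ofReal (F.card : ℝ) := (ENNReal.ofReal_natCast _).symm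
      _ ≤ ENNReal.ofReal D := ENNReal.ofReal_le_ofReal hcard.le
  have hfinP : ∀ i, P0 i ≠ ⊤ := by
    intro i
    have hle1 : P0 i ≤ 1 := by
      rw [hP0def]
      simp only []
      calc ∫⁻ x', A x' (T i) ∂(S i0) ≤ ∫⁻ _, (1 : ℝ≥0∞) ∂(S i0) :=
            lintegral_mono fun x' => prob_le_one
        _ = 1 := by simp
    exact ne_top_of_le_ne_top ENNReal.one_ne_top hle1
  have hsumP : (∑ i : Fin d, P0 i) ≤ ENNReal.ofReal D := by
    have hAx : ∀ x', (∑ i : Fin d, A x' (T i)) ≤ ENNReal.ofReal D := by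
      intro x'
      calc (∑ i : Fin d, A x' (T i))
          = ∑ i : Fin d, ∫⁻ v, (T i).indicator (fun _ => (1 : ℝ≥0∞)) v ∂(A x') := by
            refine Finset.sum_congr rfl fun i _ => ?_
            rw [lintegral_indicator (hT i), setLIntegral_one]
        _ = ∫⁻ v, (∑ i : Fin d, (T i).indicator (fun _ => (1 : ℝ≥0∞)) v) ∂(A x') := by
            rw [lintegral_finset_sum]
            exact fun i _ => measurable_one.indicator (hT i)
        _ ≤ ∫⁻ _, ENNReal.ofReal D ∂(A x') := lintegral_mono hcount
        _ = ENNReal.ofReal D := by simp [lintegral_const]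
    calc (∑ i : Fin d, P0 i) = ∫⁻ x', (∑ i : Fin d, A x' (T i)) ∂(S i0) := by
          rw [hP0def, ← lintegral_finset_sum]
          exact fun i _ => measN _
      _ ≤ ∫⁻ _, ENNReal.ofReal D ∂(S i0) := lintegral_mono hAx
      _ = ENNReal.ofReal D := by simp [lintegral_const]
  -- move to the reals for the final contradiction
  have hPreal : ∀ i, 1 / (4 * D) < (P0 i).toReal := by
    intro i
    have h := hP i
    rw [← ENNReal.ofReal_toReal (hfinP i)] at h
    exact (ENNReal.ofReal_lt_ofReal_iff_of_nonneg (by positivity)).mp h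
  have hsum_real : (∑ i : Fin d, (P0 i).toReal) ≤ D := by
    rw [← ENNReal.toReal_sum (fun i _ => hfinP i)]
    exact ENNReal.toReal_le_of_le_ofReal hDpos.le hsumP
  have hlow : (d : ℝ) * (1 / (4 * D)) < ∑ i : Fin d, (P0 i).toReal := by
    calc (d : ℝ) * (1 / (4 * D)) = ∑ _i : Fin d, 1 / (4 * D) := by
          rw [Finset.sum_const, Finset.card_univ, Fintype.card_fin, nsmul_eq_mul]
      _ < ∑ i : Fin d, (P0 i).toReal :=
          Finset.sum_lt_sum_of_nonempty ⟨i0, Finset.mem_univ i0⟩ fun i _ => hPreal i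
  -- but D ≤ d / (4 D) since 4 √d ≤ d
  have hDD : D * D = Real.sqrt d := by
    rw [hDdef, ← Real.rpow_add hdpos, Real.sqrt_eq_rpow]
    norm_num
  have hs4 : (4 : ℝ) ≤ Real.sqrt d := by
    have h := Real.sqrt_le_sqrt (show (16:ℝ) ≤ d by exact_mod_cast hd)
    rw [show (16:ℝ) = 4 ^ 2 by norm_num, Real.sqrt_sq (by norm_num : (0:ℝ) ≤ 4)] at h
    exact h
  have hsq : Real.sqrt d * Real.sqrt d = d := Real.mul_self_sqrt hdpos.le
  have hDled : D ≤ (d : ℝ) * (1 / (4 * D)) := by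
    rw [mul_one_div, le_div_iff₀ (by positivity : (0:ℝ) < 4 * D)]
    nlinarith [hDD, hs4, hsq, hDpos]
  linarith [hDled, hlow, hsum_real]
end

section
/- (Necessity of the neighborhood size.) Let n ≥ 1 and d ≥ 16 be integers, set ε = ln(d)/(16n), let 0 ≤ δ ≤ ε/(d^{1/4}·ln d) and 0 < γ ≤ 1/32. For p ∈ Δ(d) let N_γ(p) = {q ∈ Δ(d) : |q_i − p_i| ≤ γ·ln(d)/(nε) for all i, and Σ_{i: p_i ≤ γ ln(d)/(nε)} q_i ≤ max{γ·ln(d)/(nε), Σ_{i: p_i ≤ γ ln(d)/(nε)} p_i}}. For i ∈ {1,…,d} let δ^i ∈ Δ(d) be the point mass at i. Then: (i) for each i, the fixed vector q^i ∈ Δ(d) given by q^i_i = 1 − γ·ln(d)/(nε) and q^i_j = γ·ln(d)/(nε·(d−1)) for j ≠ i satisfies sup_{q ∈ N_γ(δ^i)} KL(q‖q^i) ≤ 48·γ·ln d; and (ii) for every (ε,δ)-differentially private randomized estimator A there exists i ∈ {1,…,d} with E_{x∼Poi(n·δ^i)} E_{v∼A(x)}[KL(δ^i‖v)] ≥ ln(d)/16.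 -/
open MeasureTheory ProbabilityTheory Real
open scoped ENNReal NNReal

/-- The probability simplex `Δ(d)` as a subset of `ℝ^d`. -/
def simplex (d : ℕ) : Set (Fin d → ℝ) := {v | (∀ i, 0 ≤ v i) ∧ ∑ i, v i = 1}

/-- The law of a vector in `ℕ^d` with independent coordinates, coordinate `i` being
Poisson with mean `lam i`. -/
noncomputable def poiVec {d : ℕ} (lam : Fin d → ℝ) : Measure (Fin d → ℕ) :=
  Measure.pi fun i => poissonMeasure (Real.toNNReal (lam i))

/-- `(ε, δ)`-differential privacy for a randomized estimator mapping count vectors in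
`ℕ^d` to probability measures on `ℝ^d`: for neighboring inputs (ℓ₁-distance at most 1)
and every measurable output set `T`, `A x T ≤ e^ε · A x' T + δ`. -/
def IsDP {d : ℕ} (A : (Fin d → ℕ) → Measure (Fin d → ℝ)) (ε δ : ℝ) : Prop :=
  ∀ x x' : Fin d → ℕ, (∑ i, ((x i : ℤ) - x' i).natAbs) ≤ 1 →
    ∀ T : Set (Fin d → ℝ), MeasurableSet T →
      A x T ≤ ENNReal.ofReal (Real.exp ε) * A x' T + ENNReal.ofReal δ

/-! ### Auxiliary lemmas -/

section Aux

lemma aux_poisson_moment2 (r : ℝ≥0) :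
    ∑' k : ℕ, ((k * (k - 1) : ℕ) : ℝ≥0∞) * poissonPMF r k = ((r : ℝ≥0∞)) ^ 2 := by
  have hpmf : ∀ k, (poissonPMF r k : ℝ≥0∞) = ENNReal.ofReal (poissonPMFReal r k) := by
    intro k; rfl
  have h0 : ((0 * (0 - 1) : ℕ) : ℝ≥0∞) * poissonPMF r 0 = 0 := by simp
  have h1 : ((1 * (1 - 1) : ℕ) : ℝ≥0∞) * poissonPMF r 1 = 0 := by simp
  rw [tsum_eq_zero_add' ENNReal.summable, tsum_eq_zero_add' ENNReal.summable, h0, h1,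
    zero_add, zero_add]
  have key : ∀ k : ℕ, (((k + 2) * ((k + 2) - 1) : ℕ) : ℝ≥0∞) * poissonPMF r (k + 2)
      = (r : ℝ≥0∞) ^ 2 * poissonPMF r k := by
    intro k
    rw [hpmf, hpmf]
    have hr2 : ((r : ℝ≥0∞)) ^ 2 = ENNReal.ofReal ((r : ℝ) ^ 2) := by
      rw [ENNReal.ofReal_pow r.coe_nonneg]
      congr 1
      simp [ENNReal.ofReal_coe_nnreal]
    rw [hr2, ← ENNReal.ofReal_mul (by positivity), ← ENNReal.ofReal_natCast,
      ← ENNReal.ofReal_mul (by positivity)]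
    congr 1
    unfold poissonPMFReal
    have hfac : ((Nat.factorial (k + 2)) : ℝ)
        = ((k : ℝ) + 2) * ((k : ℝ) + 1) * (Nat.factorial k : ℝ) := by
      rw [Nat.factorial_succ, Nat.factorial_succ]; push_cast; ring
    have hnn : ((k + 2) * ((k + 2) - 1) : ℕ) = ((k + 2) * (k + 1) : ℕ) := rfl
    rw [hnn]
    push_cast
    rw [hfac]
    have hk : ((Nat.factorial k) : ℝ) ≠ 0 := by positivity
    field_simp
    ring
  have h2 : ∑' (b : ℕ), (((b + 1 + 1) * ((b + 1 + 1) - 1) : ℕ) : ℝ≥0∞) * poissonPMF r (b + 1 + 1)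
      = ∑' (b : ℕ), (r : ℝ≥0∞) ^ 2 * poissonPMF r b := tsum_congr fun k => key k
  rw [h2, ENNReal.tsum_mul_left, (poissonPMF r).tsum_coe, mul_one]

lemma aux_poisson_tail (n : ℕ) (hn : 1 ≤ n) :
    poissonMeasure (n : ℝ≥0) {k : ℕ | 2 * n < k} ≤ 1 / 4 := by
  set S : Set ℕ := {k : ℕ | 2 * n < k} with hS
  have hmeas : MeasurableSet S := trivial
  have happ : poissonMeasure (n : ℝ≥0) S = ∑' k : ℕ, S.indicator (⇑(poissonPMF n)) k :=
    by
      classical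
      rw [poissonMeasure, Measure.sum_apply _ hmeas]
      refine tsum_congr fun k => ?_
      rw [Measure.smul_apply, smul_eq_mul, Measure.dirac_apply' _ hmeas, Set.indicator_apply,
        Set.indicator_apply, ← poissonPMFReal_ofReal_eq_poissonPMF]
      split_ifs <;> simp [poissonPMFReal]
  set c : ℝ≥0∞ := (((2 * n + 1) * (2 * n) : ℕ) : ℝ≥0∞) with hc
  have hc0 : c ≠ 0 := by
    rw [hc]
    exact Nat.cast_ne_zero.mpr (Nat.mul_ne_zero (by omega) (by omega))
  have hctop : c ≠ ⊤ := by rw [hc]; exact ENNReal.natCast_ne_top _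
  have hbound : ∀ k : ℕ, S.indicator (⇑(poissonPMF n)) k
      ≤ ((k * (k - 1) : ℕ) : ℝ≥0∞) * poissonPMF n k / c := by
    intro k
    by_cases hk : k ∈ S
    · rw [Set.indicator_of_mem hk]
      have hineq : ((2 * n + 1) * (2 * n) : ℕ) ≤ (k * (k - 1) : ℕ) := by
        simp only [hS, Set.mem_setOf_eq] at hk
        have h1 : 2 * n + 1 ≤ k := hk
        exact Nat.mul_le_mul h1 (by omega)
      calc (poissonPMF n) k = c * (poissonPMF n) k / c := by
            rw [mul_comm, mul_div_assoc, ENNReal.div_self hc0 hctop, mul_one]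
        _ ≤ ((k * (k - 1) : ℕ) : ℝ≥0∞) * poissonPMF n k / c := by
            gcongr
            rw [hc]
            exact_mod_cast hineq
    · rw [Set.indicator_of_notMem hk]; exact zero_le
  have hsum := ENNReal.tsum_le_tsum hbound
  rw [← happ] at hsum
  have hdiv : ∑' k : ℕ, ((k * (k - 1) : ℕ) : ℝ≥0∞) * poissonPMF n k / c
      = (∑' k : ℕ, ((k * (k - 1) : ℕ) : ℝ≥0∞) * poissonPMF n k) / c := by
    simp_rw [div_eq_mul_inv]
    rw [ENNReal.tsum_mul_right]
  rw [hdiv, aux_poisson_moment2] at hsum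
  refine hsum.trans ?_
  rw [ENNReal.div_le_iff hc0 hctop]
  have hcast : ((n : ℝ≥0) : ℝ≥0∞) = (n : ℝ≥0∞) := by simp
  rw [hcast, hc, one_div]
  have hnat : (4 * n ^ 2 : ℕ) ≤ (2 * n + 1) * (2 * n) := by nlinarith
  have h4 : (4 : ℝ≥0∞)⁻¹ * 4 = 1 := ENNReal.inv_mul_cancel (by norm_num) (by norm_num)
  calc (n : ℝ≥0∞) ^ 2 = 4⁻¹ * (4 * (n : ℝ≥0∞) ^ 2) := by rw [← mul_assoc, h4, one_mul]
    _ ≤ 4⁻¹ * (((2 * n + 1) * (2 * n) : ℕ) : ℝ≥0∞) := by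
        gcongr
        exact_mod_cast hnat

lemma aux_measSet {d : ℕ} (S : Set (Fin d → ℕ)) : MeasurableSet S := by
  have h1 : ∀ x : Fin d → ℕ, MeasurableSet ({x} : Set (Fin d → ℕ)) := by
    intro x
    have hx : ({x} : Set (Fin d → ℕ)) = ⋂ i, (fun y : Fin d → ℕ => y i) ⁻¹' {x i} := by
      ext y
      simp [funext_iff, Set.mem_iInter, eq_comm]
    rw [hx]
    exact MeasurableSet.iInter fun i => (measurable_pi_apply i) (measurableSet_singleton _)
  have hS : S = ⋃ x ∈ S, {x} := by simp
  rw [hS]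
  exact MeasurableSet.biUnion (Set.to_countable S) fun x _ => h1 x

lemma aux_measAll {d : ℕ} (f : (Fin d → ℕ) → ℝ≥0∞) : Measurable f := fun _ _ => aux_measSet _

lemma aux_groupDP {d : ℕ} {A : (Fin d → ℕ) → Measure (Fin d → ℝ)} {ε δ : ℝ}
    (hdp : IsDP A ε δ) (hε : 0 ≤ ε) (T : Set (Fin d → ℝ)) (hT : MeasurableSet T) :
    ∀ m : ℕ, ∀ x : Fin d → ℕ, (∑ j, x j) ≤ m →
      A x T ≤ ENNReal.ofReal (Real.exp (m * ε)) * (A 0 T + m * ENNReal.ofReal δ) := by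
  intro m
  induction m with
  | zero =>
    intro x hx
    have hx0 : x = 0 := by
      funext j
      have := (Finset.sum_eq_zero_iff.mp (Nat.le_zero.mp hx)) j (Finset.mem_univ j)
      simpa using this
    simp [hx0]
  | succ m ih =>
    intro x hx
    by_cases h : (∑ j, x j) ≤ m
    · refine (ih x h).trans ?_
      have h1 : ENNReal.ofReal (Real.exp (m * ε)) ≤ ENNReal.ofReal (Real.exp ((m + 1 : ℕ) * ε)) := by
        apply ENNReal.ofReal_le_ofReal
        apply Real.exp_le_exp.mpr
        push_cast
        nlinarith
      have h2 : ((m : ℝ≥0∞)) ≤ ((m + 1 : ℕ) : ℝ≥0∞) := by exact_mod_cast Nat.le_succ m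
      exact mul_le_mul' h1 (add_le_add le_rfl (mul_le_mul' h2 le_rfl))
    · have hsum : (∑ j, x j) = m + 1 := by omega
      have hex : ∃ j, x j ≠ 0 := by
        by_contra hno
        push_neg at hno
        rw [Finset.sum_eq_zero (fun j _ => hno j)] at hsum
        omega
      obtain ⟨j, hj⟩ := hex
      set x' : Fin d → ℕ := Function.update x j (x j - 1) with hx'
      have hnb : (∑ i, ((x i : ℤ) - x' i).natAbs) ≤ 1 := by
        have : (∑ i, ((x i : ℤ) - x' i).natAbs) = 1 := by
          rw [Finset.sum_eq_single j]
          · rw [hx', Function.update_self]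
            omega
          · intro i _ hi
            rw [hx', Function.update_of_ne hi]
            omega
          · intro hcon
            exact absurd (Finset.mem_univ j) hcon
        omega
      have hx'm : (∑ i, x' i) ≤ m := by
        have hupd : (∑ i, x' i) = (x j - 1) + ∑ i ∈ Finset.univ.erase j, x i := by
          rw [hx', Finset.sum_update_of_mem (Finset.mem_univ j), ← Finset.erase_eq]
        have hxj : (∑ i, x i) = x j + ∑ i ∈ Finset.univ.erase j, x i :=
          (Finset.add_sum_erase _ _ (Finset.mem_univ j)).symm
        omega
      calc A x T ≤ ENNReal.ofReal (Real.exp ε) * A x' T + ENNReal.ofReal δ := hdp x x' hnb T hT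
        _ ≤ ENNReal.ofReal (Real.exp ε) *
              (ENNReal.ofReal (Real.exp (m * ε)) * (A 0 T + m * ENNReal.ofReal δ))
            + ENNReal.ofReal δ := by
            exact add_le_add (mul_le_mul' le_rfl (ih x' hx'm)) le_rfl
        _ = ENNReal.ofReal (Real.exp ((m + 1 : ℕ) * ε)) * (A 0 T + m * ENNReal.ofReal δ)
            + ENNReal.ofReal δ := by
            rw [← mul_assoc, ← ENNReal.ofReal_mul (exp_nonneg _), ← Real.exp_add]
            congr 3
            push_cast
            ring
        _ ≤ ENNReal.ofReal (Real.exp ((m + 1 : ℕ) * ε)) *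
              (A 0 T + (m + 1 : ℕ) * ENNReal.ofReal δ) := by
            have hone : (1 : ℝ≥0∞) ≤ ENNReal.ofReal (Real.exp ((m + 1 : ℕ) * ε)) := by
              apply ENNReal.one_le_ofReal.mpr
              apply Real.one_le_exp
              positivity
            have hexp : ((m + 1 : ℕ) : ℝ≥0∞) * ENNReal.ofReal δ
                = (m : ℝ≥0∞) * ENNReal.ofReal δ + ENNReal.ofReal δ := by
              push_cast
              ring
            rw [hexp]
            calc ENNReal.ofReal (Real.exp ((m + 1 : ℕ) * ε)) * (A 0 T + ↑m * ENNReal.ofReal δ)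
                  + ENNReal.ofReal δ
                ≤ ENNReal.ofReal (Real.exp ((m + 1 : ℕ) * ε)) * (A 0 T + ↑m * ENNReal.ofReal δ)
                  + ENNReal.ofReal (Real.exp ((m + 1 : ℕ) * ε)) * ENNReal.ofReal δ :=
                  add_le_add le_rfl (le_mul_of_one_le_left zero_le hone)
              _ = ENNReal.ofReal (Real.exp ((m + 1 : ℕ) * ε)) *
                  (A 0 T + (↑m * ENNReal.ofReal δ + ENNReal.ofReal δ)) := by ring

lemma aux_klDiv_delta_lb {d : ℕ} (i : Fin d) (c : ℝ) (v : Fin d → ℝ) (hv : v i ≤ c) :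
    ENNReal.ofReal (-Real.log c) ≤ klDiv (fun j => if j = i then (1 : ℝ) else 0) v := by
  unfold klDiv
  split_ifs with h
  · have hvi : 0 < v i := h i (by simp)
    have hterm : ∀ j : Fin d,
        (if 0 < (if j = i then (1 : ℝ) else 0) then
          (if j = i then (1 : ℝ) else 0) * Real.log ((if j = i then (1 : ℝ) else 0) / v j) else 0)
        = (if j = i then Real.log (1 / v j) else 0) := by
      intro j
      by_cases hj : j = i <;> simp [hj]
    rw [Finset.sum_congr rfl (fun j _ => hterm j), Finset.sum_ite_eq' Finset.univ i]
    simp only [Finset.mem_univ, if_true]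
    apply ENNReal.ofReal_le_ofReal
    rw [Real.log_div one_ne_zero (ne_of_gt hvi), Real.log_one, zero_sub]
    exact neg_le_neg (Real.log_le_log hvi hv)
  · exact le_top

lemma aux_part_i_main {d : ℕ} (hd : 16 ≤ d) (i : Fin d) (t : ℝ) (ht0 : 0 < t) (ht : t ≤ 1 / 2)
    (q : Fin d → ℝ) (hq0 : ∀ j, 0 ≤ q j) (hq1 : ∑ j, q j = 1)
    (hnear : ∀ j, |q j - (if j = i then (1 : ℝ) else 0)| ≤ t)
    (hs : ∑ j ∈ Finset.univ.erase i, q j ≤ t) :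
    klDiv q (fun j => if j = i then 1 - t else t / ((d : ℝ) - 1))
      ≤ ENNReal.ofReal (3 * t * Real.log d) := by
  have hdpos : (0 : ℝ) < d := by positivity
  have hd16 : (16 : ℝ) ≤ d := by exact_mod_cast hd
  have hL1 : 1 ≤ Real.log d := by
    rw [Real.le_log_iff_exp_le hdpos]
    calc Real.exp 1 ≤ 2.7182818286 := le_of_lt Real.exp_one_lt_d9
      _ ≤ (d : ℝ) := by linarith
  set L := Real.log d with hLdef
  have hd1 : (15 : ℝ) ≤ (d : ℝ) - 1 := by linarith
  have hrpos : ∀ j, 0 < (if j = i then 1 - t else t / ((d : ℝ) - 1)) := by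
    intro j
    split_ifs
    · linarith
    · positivity
  have hqi : 1 - t ≤ q i := by
    have h := hnear i
    rw [if_pos rfl] at h
    have h2 := abs_le.mp h
    linarith [h2.1]
  have hqi1 : q i ≤ 1 := by
    have hle : q i ≤ ∑ j, q j := Finset.single_le_sum (fun j _ => hq0 j) (Finset.mem_univ i)
    linarith [hq1 ▸ hle]
  have hqipos : 0 < q i := by linarith
  unfold klDiv
  rw [if_pos (fun j _ => hrpos j)]
  apply ENNReal.ofReal_le_ofReal
  rw [← Finset.add_sum_erase Finset.univ _ (Finset.mem_univ i)]
  beta_reduce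
  -- bound the i term
  have hterm_i : (if 0 < q i then q i * Real.log (q i / (if i = i then 1 - t else t / ((d : ℝ) - 1))) else 0)
      ≤ 2 * t := by
    rw [if_pos hqipos, if_pos rfl]
    have h1t : (0 : ℝ) < 1 - t := by linarith
    have hXpos : 0 < q i / (1 - t) := by positivity
    have hX1 : 1 ≤ q i / (1 - t) := (le_div_iff₀ h1t).mpr (by linarith)
    have hlog0 : 0 ≤ Real.log (q i / (1 - t)) := Real.log_nonneg hX1
    have hexp : q i / (1 - t) ≤ Real.exp (2 * t) := by
      have hge : (1 : ℝ) ≤ (1 - t) * Real.exp (2 * t) := by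
        nlinarith [Real.add_one_le_exp (2 * t)]
      rw [div_le_iff₀ h1t]
      calc q i ≤ 1 := hqi1
        _ ≤ (1 - t) * Real.exp (2 * t) := hge
        _ = Real.exp (2 * t) * (1 - t) := by ring
    calc q i * Real.log (q i / (1 - t)) ≤ Real.log (q i / (1 - t)) :=
          mul_le_of_le_one_left hlog0 hqi1
      _ ≤ 2 * t := (Real.log_le_iff_le_exp hXpos).mpr hexp
  -- bound the other terms
  have hterm_j : ∀ j ∈ Finset.univ.erase i,
      (if 0 < q j then q j * Real.log (q j / (if j = i then 1 - t else t / ((d : ℝ) - 1))) else 0)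
      ≤ q j * L := by
    intro j hj
    have hji : j ≠ i := Finset.ne_of_mem_erase hj
    rw [if_neg hji]
    by_cases hqj : 0 < q j
    · rw [if_pos hqj]
      have hqjt : q j ≤ t := by
        have := hnear j
        rw [if_neg hji] at this
        have := abs_le.mp (by simpa using this)
        linarith [this.2]
      have htd : (0 : ℝ) < t / ((d : ℝ) - 1) := by positivity
      have hXpos : 0 < q j / (t / ((d : ℝ) - 1)) := by positivity
      have hXle : q j / (t / ((d : ℝ) - 1)) ≤ (d : ℝ) := by
        rw [div_le_iff₀ htd]
        calc q j ≤ t := hqjt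
          _ = t / ((d : ℝ) - 1) * ((d : ℝ) - 1) := by field_simp
          _ ≤ (d : ℝ) * (t / ((d : ℝ) - 1)) := by nlinarith
      have : Real.log (q j / (t / ((d : ℝ) - 1))) ≤ L := by
        rw [hLdef]
        exact Real.log_le_log hXpos hXle
      exact mul_le_mul_of_nonneg_left this (le_of_lt hqj)
    · rw [if_neg hqj]
      have : q j = 0 := le_antisymm (not_lt.mp hqj) (hq0 j)
      rw [this, zero_mul]
  have hsum_j : ∑ j ∈ Finset.univ.erase i,
      (if 0 < q j then q j * Real.log (q j / (if j = i then 1 - t else t / ((d : ℝ) - 1))) else 0)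
      ≤ t * L := by
    calc ∑ j ∈ Finset.univ.erase i, _ ≤ ∑ j ∈ Finset.univ.erase i, q j * L :=
          Finset.sum_le_sum hterm_j
      _ = (∑ j ∈ Finset.univ.erase i, q j) * L := by rw [← Finset.sum_mul]
      _ ≤ t * L := mul_le_mul_of_nonneg_right hs (by linarith)
  nlinarith [hterm_i, hsum_j]

lemma aux_ofReal_half : (1 / 2 : ℝ≥0∞) = ENNReal.ofReal (1 / 2) := by
  rw [ENNReal.ofReal_div_of_pos (by norm_num)]
  norm_num [ENNReal.ofReal_one, ENNReal.ofReal_ofNat]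

lemma aux_ofReal_quarter : (1 / 4 : ℝ≥0∞) = ENNReal.ofReal (1 / 4) := by
  rw [ENNReal.ofReal_div_of_pos (by norm_num)]
  norm_num [ENNReal.ofReal_one, ENNReal.ofReal_ofNat]

lemma aux_quarter_ne_top : (1 / 4 : ℝ≥0∞) ≠ ⊤ := by
  rw [aux_ofReal_quarter]; exact ENNReal.ofReal_ne_top

lemma aux_ofReal_3q : (3 / 4 : ℝ≥0∞) = ENNReal.ofReal (3 / 4) := by
  rw [ENNReal.ofReal_div_of_pos (by norm_num)]
  norm_num [ENNReal.ofReal_ofNat]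

lemma aux_3q_ne_top : (3 / 4 : ℝ≥0∞) ≠ ⊤ := by
  rw [aux_ofReal_3q]; exact ENNReal.ofReal_ne_top

lemma aux_3q_add_q : (3 / 4 + 1 / 4 : ℝ≥0∞) = 1 := by
  rw [aux_ofReal_3q, aux_ofReal_quarter, ← ENNReal.ofReal_add (by norm_num) (by norm_num)]
  norm_num

lemma aux_quarter_of {C : ℝ≥0∞} (h : 1 / 2 ≤ C + 1 / 4) : 1 / 4 ≤ C := by
  by_contra hc
  push_neg at hc
  have h2 : C + 1 / 4 < 1 / 4 + 1 / 4 := ENNReal.add_lt_add_right aux_quarter_ne_top hc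
  have h3 : (1 / 4 + 1 / 4 : ℝ≥0∞) = 1 / 2 := by
    rw [aux_ofReal_quarter, aux_ofReal_half, ← ENNReal.ofReal_add (by norm_num) (by norm_num)]
    norm_num
  rw [h3] at h2
  exact absurd (h.trans_lt h2) (lt_irrefl _)

lemma aux_numeric (D : ℝ) (h16 : 16 ≤ D ^ 8) (h0 : 0 < D)
    (h : D ^ 8 / 4 ≤ D ^ 2 + D ^ 7 / 8) : False := by
  have h4 : 4 ≤ D ^ 4 := by nlinarith [sq_nonneg (D ^ 4 - 4), sq_nonneg (D ^ 4 + 4), pow_pos h0 4]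
  have h2 : 2 ≤ D ^ 2 := by nlinarith [sq_nonneg (D ^ 2 - 2), sq_nonneg (D ^ 2 + 2), pow_pos h0 2]
  have h1 : 1 < D := by nlinarith
  nlinarith [mul_pos (pow_pos h0 7) (sub_pos.mpr h1),
    pow_le_pow_left₀ (by positivity : (0 : ℝ) ≤ 2) h2 3]

lemma aux_half_le {t u : ℝ≥0∞} (h : t + u = 1) (ht : t < 1 / 2) : 1 / 2 ≤ u := by
  by_contra hc
  push_neg at hc
  have h2 := ENNReal.add_lt_add ht hc
  have h3 : (1 / 2 + 1 / 2 : ℝ≥0∞) = 1 := by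
    rw [aux_ofReal_half, ← ENNReal.ofReal_add (by norm_num) (by norm_num)]
    norm_num
  rw [h, h3] at h2
  exact absurd h2 (lt_irrefl _)

end Aux

/-- **Necessity of the neighborhood size for DP instance-optimality**: with
`ε = ln(d)/(16n)` and point-mass instances `δ^i`, (i) a per-neighborhood estimator
achieves worst-case KL error at most `48·γ·ln d` over `N_γ(δ^i)`, while (ii) every
`(ε,δ)`-DP estimator incurs expected KL error at least `ln(d)/16` on some `δ^i`. -/
theorem necessity_of_neighborhood_size
    (n d : ℕ) (hn : 1 ≤ n) (hd : 16 ≤ d)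
    (ε : ℝ) (hε : ε = Real.log d / (16 * n))
    (δ : ℝ) (hδ0 : 0 ≤ δ) (hδ : δ ≤ ε / ((d : ℝ) ^ ((1 : ℝ) / 4) * Real.log d))
    (γ : ℝ) (hγ0 : 0 < γ) (hγ : γ ≤ 1 / 32) :
    -- (i) the per-neighborhood estimator `q^i` is accurate on all of `N_γ(δ^i)`
    (∀ i : Fin d, ∀ q : Fin d → ℝ, q ∈ simplex d →
      (∀ j, |q j - (if j = i then (1 : ℝ) else 0)| ≤ γ * Real.log d / (n * ε)) →
      (∑ j ∈ Finset.univ.filter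
          (fun j => (if j = i then (1 : ℝ) else 0) ≤ γ * Real.log d / (n * ε)), q j ≤
        max (γ * Real.log d / (n * ε))
          (∑ j ∈ Finset.univ.filter
            (fun j => (if j = i then (1 : ℝ) else 0) ≤ γ * Real.log d / (n * ε)),
              (if j = i then (1 : ℝ) else 0))) →
      klDiv q (fun j => if j = i then 1 - γ * Real.log d / (n * ε)
                        else γ * Real.log d / (n * ε * (d - 1)))
        ≤ ENNReal.ofReal (48 * γ * Real.log d)) ∧
    -- (ii) every `(ε,δ)`-DP estimator fails on some point mass `δ^i`
    (∀ A : (Fin d → ℕ) → Measure (Fin d → ℝ),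
      (∀ x, IsProbabilityMeasure (A x)) →
      (∀ x, A x (simplex d) = 1) →
      IsDP A ε δ →
      ∃ i : Fin d,
        ENNReal.ofReal (Real.log d / 16) ≤
          ∫⁻ x, ∫⁻ v, klDiv (fun j => if j = i then (1 : ℝ) else 0) v
            ∂(A x) ∂(poiVec fun j => (n : ℝ) * (if j = i then (1 : ℝ) else 0))) := by
  have hdpos : (0 : ℝ) < d := by positivity
  have hd16 : (16 : ℝ) ≤ d := by exact_mod_cast hd
  have hnpos : (0 : ℝ) < n := by exact_mod_cast hn
  have hL1 : 1 ≤ Real.log d := by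
    rw [Real.le_log_iff_exp_le hdpos]
    calc Real.exp 1 ≤ 2.7182818286 := le_of_lt Real.exp_one_lt_d9
      _ ≤ (d : ℝ) := by linarith
  set L := Real.log d with hLdef
  have hLpos : 0 < L := by linarith
  have hεpos : 0 < ε := by rw [hε]; positivity
  have hnε : (n : ℝ) * ε = L / 16 := by
    rw [hε]
    field_simp
  have ht16 : γ * L / ((n : ℝ) * ε) = 16 * γ := by
    rw [hnε]
    field_simp
  constructor
  · -- Part (i)
    intro i q hq hnear hsum
    have ht0 : 0 < 16 * γ := by linarith
    have ht : 16 * γ ≤ 1 / 2 := by linarith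
    rw [ht16] at hnear hsum
    have hfilter : Finset.univ.filter
        (fun j => (if j = i then (1 : ℝ) else 0) ≤ 16 * γ) = Finset.univ.erase i := by
      ext j
      simp only [Finset.mem_filter, Finset.mem_univ, true_and, Finset.mem_erase, and_true]
      constructor
      · intro hle hji
        rw [if_pos hji] at hle
        linarith
      · intro hne
        rw [if_neg hne]
        linarith
    rw [hfilter] at hsum
    have hzero : ∑ j ∈ Finset.univ.erase i, (if j = i then (1 : ℝ) else 0) = 0 :=
      Finset.sum_eq_zero fun j hj => if_neg (Finset.ne_of_mem_erase hj)
    rw [hzero, max_eq_left (by linarith)] at hsum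
    have hfun : (fun j => if j = i then 1 - γ * L / (n * ε)
        else γ * L / (n * ε * (d - 1)))
        = (fun j => if j = i then 1 - 16 * γ else 16 * γ / ((d : ℝ) - 1)) := by
      funext j
      by_cases hj : j = i
      · rw [if_pos hj, if_pos hj, ht16]
      · rw [if_neg hj, if_neg hj]
        rw [hnε]
        have h15 : (15 : ℝ) ≤ (d : ℝ) - 1 := by linarith
        field_simp
    rw [hfun]
    have h48 : 48 * γ * L = 3 * (16 * γ) * L := by ring
    rw [h48]
    exact aux_part_i_main hd i (16 * γ) ht0 ht q hq.1 hq.2 hnear hsum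
  · -- Part (ii)
    intro A hAprob hAsimp hdp
    by_contra hcon
    push_neg at hcon
    have herr := hcon
    clear hcon
    set D : ℝ := Real.exp (L / 8) with hDdef
    have hD0 : 0 < D := Real.exp_pos _
    set c' : ℝ := Real.exp (-(L / 8)) with hc'def
    have hc'0 : 0 < c' := Real.exp_pos _
    -- measurable sets in the output space
    set Sset : Fin d → Set (Fin d → ℝ) := fun i => {v | v i ≤ c'} with hSsetdef
    have hSm : ∀ i, MeasurableSet (Sset i) :=
      fun i => (measurable_pi_apply i) measurableSet_Iic
    have hBm : ∀ i, MeasurableSet (Sset i)ᶜ := fun i => (hSm i).compl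
    have hsimpm : MeasurableSet (simplex d) := by
      have h1 : simplex d = (⋂ i, (fun v : Fin d → ℝ => v i) ⁻¹' Set.Ici 0)
          ∩ ((fun v : Fin d → ℝ => ∑ i, v i) ⁻¹' {1}) := by
        ext v
        simp [simplex, Set.mem_iInter]
      rw [h1]
      exact (MeasurableSet.iInter fun i => (measurable_pi_apply i) measurableSet_Ici).inter
        ((Finset.measurable_sum Finset.univ fun i _ => measurable_pi_apply i)
          (measurableSet_singleton 1))
    -- identify the input measure
    have hμ : ∀ i : Fin d, (poiVec fun j => (n : ℝ) * (if j = i then (1 : ℝ) else 0))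
        = Measure.pi (fun j => poissonMeasure (if j = i then (n : ℝ≥0) else 0)) := by
      intro i
      rw [poiVec]
      congr 1
      funext j
      by_cases hj : j = i <;> simp [hj]
    -- a_i, the real mass the estimator at 0 puts on {v_i > c'}
    set a : Fin d → ℝ := fun i => (A 0 (Sset i)ᶜ).toReal with hadef
    have ha0 : ∀ i, 0 ≤ a i := fun i => ENNReal.toReal_nonneg
    have hafin : ∀ i, A 0 (Sset i)ᶜ ≠ ⊤ := fun i => measure_ne_top _ _
    have haeq : ∀ i, A 0 (Sset i)ᶜ = ENNReal.ofReal (a i) :=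
      fun i => (ENNReal.ofReal_toReal (hafin i)).symm
    -- Step 1: for every i, 1/4 ≤ D * (a i + 2nδ)
    have hstep1 : ∀ i : Fin d, (1 / 4 : ℝ) ≤ D * (a i + ((2 * n : ℕ) : ℝ) * δ) := by
      intro i
      set μi := Measure.pi (fun j => poissonMeasure (if j = i then (n : ℝ≥0) else 0)) with hμidef
      haveI : IsProbabilityMeasure μi := by
        rw [hμidef]
        infer_instance
      -- inner KL bound
      have hinner : ∀ x, ENNReal.ofReal (L / 8) * A x (Sset i)
          ≤ ∫⁻ v, klDiv (fun j => if j = i then (1 : ℝ) else 0) v ∂(A x) := by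
        intro x
        rw [← lintegral_indicator_const (hSm i) (ENNReal.ofReal (L / 8))]
        apply lintegral_mono
        intro v
        by_cases hv : v ∈ Sset i
        · rw [Set.indicator_of_mem hv]
          have hlog : ENNReal.ofReal (L / 8) = ENNReal.ofReal (-Real.log c') := by
            rw [hc'def, Real.log_exp, neg_neg]
          rw [hlog]
          exact aux_klDiv_delta_lb i c' v hv
        · rw [Set.indicator_of_notMem hv]
          exact zero_le
      -- t_i < 1/2
      set ti := ∫⁻ x, A x (Sset i) ∂μi with htidef
      have hti : ENNReal.ofReal (L / 8) * ti < ENNReal.ofReal (L / 16) := by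
        calc ENNReal.ofReal (L / 8) * ti
            = ∫⁻ x, ENNReal.ofReal (L / 8) * A x (Sset i) ∂μi := by
              rw [htidef, lintegral_const_mul' _ _ ENNReal.ofReal_ne_top]
          _ ≤ ∫⁻ x, ∫⁻ v, klDiv (fun j => if j = i then (1 : ℝ) else 0) v ∂(A x) ∂μi :=
              lintegral_mono fun x => hinner x
          _ < ENNReal.ofReal (L / 16) := by
              have := herr i
              rwa [hμ i] at this
      have htihalf : ti < 1 / 2 := by
        have hkey : ENNReal.ofReal (L / 16) = ENNReal.ofReal (L / 8) * (1 / 2 : ℝ≥0∞) := by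
          rw [aux_ofReal_half, ← ENNReal.ofReal_mul (by positivity)]
          congr 1
          ring
        rw [hkey] at hti
        exact (ENNReal.mul_lt_mul_iff_right
          (ne_of_gt (ENNReal.ofReal_pos.mpr (by positivity : (0:ℝ) < L / 8)))
          ENNReal.ofReal_ne_top).mp hti
      -- u_i > 1/2
      set ui := ∫⁻ x, A x (Sset i)ᶜ ∂μi with huidef
      have htu : ti + ui = 1 := by
        rw [htidef, huidef, ← lintegral_add_left (aux_measAll _)]
        have : ∀ x, A x (Sset i) + A x (Sset i)ᶜ = 1 := by
          intro x
          haveI := hAprob x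
          rw [measure_add_measure_compl (hSm i), measure_univ]
        simp_rw [this]
        simp
      have hui : (1 / 2 : ℝ≥0∞) ≤ ui := aux_half_le htu htihalf
      -- the good event in input space
      set G : Set (Fin d → ℕ) :=
        Set.pi Set.univ (fun j => if j = i then {k : ℕ | k ≤ 2 * n} else {0}) with hGdef
      have hμG : (3 / 4 : ℝ≥0∞) ≤ μi G := by
        rw [hμidef, hGdef, Measure.pi_pi]
        have hprod : ∀ j : Fin d, (poissonMeasure (if j = i then (n : ℝ≥0) else 0))
            ((if j = i then {k : ℕ | k ≤ 2 * n} else {0}))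
            = if j = i then poissonMeasure (n : ℝ≥0) {k : ℕ | k ≤ 2 * n} else 1 := by
          intro j
          by_cases hj : j = i
          · rw [if_pos hj, if_pos hj, if_pos hj]
          · simp only [if_neg hj]
            rw [poissonMeasure_singleton]
            show ENNReal.ofReal (poissonPMFReal 0 0) = 1
            unfold poissonPMFReal
            norm_num
        rw [Finset.prod_congr rfl (fun j _ => hprod j), Finset.prod_ite_eq' Finset.univ i]
        simp only [Finset.mem_univ, if_true]
        -- poissonMeasure n {k ≤ 2n} ≥ 3/4
        have hcompl : poissonMeasure (n : ℝ≥0) {k : ℕ | k ≤ 2 * n}ᶜ ≤ 1 / 4 := by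
          have : {k : ℕ | k ≤ 2 * n}ᶜ = {k : ℕ | 2 * n < k} := by
            ext k
            simp [not_le]
          rw [this]
          exact aux_poisson_tail n hn
        haveI : IsProbabilityMeasure (poissonMeasure (n : ℝ≥0)) := inferInstance
        have h2 := measure_add_measure_compl
          (μ := poissonMeasure (n : ℝ≥0)) (s := {k : ℕ | k ≤ 2 * n}) trivial
        rw [measure_univ] at h2
        by_contra hcc
        push_neg at hcc
        have h3 : poissonMeasure (n : ℝ≥0) {k : ℕ | k ≤ 2 * n}
            + poissonMeasure (n : ℝ≥0) {k : ℕ | k ≤ 2 * n}ᶜ < 3 / 4 + 1 / 4 :=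
          ENNReal.add_lt_add_of_lt_of_le (measure_ne_top _ _) hcc hcompl
        rw [h2, aux_3q_add_q] at h3
        exact absurd h3 (lt_irrefl _)
      have hμGc : μi Gᶜ ≤ 1 / 4 := by
        have h2 := measure_add_measure_compl (μ := μi) (s := G) (aux_measSet G)
        rw [measure_univ] at h2
        by_contra hcc
        push_neg at hcc
        have h3 : 3 / 4 + 1 / 4 < μi G + μi Gᶜ :=
          ENNReal.add_lt_add_of_le_of_lt aux_3q_ne_top hμG hcc
        rw [h2, aux_3q_add_q] at h3
        exact absurd h3 (lt_irrefl _)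
      -- privacy bound on the good event
      set C : ℝ≥0∞ := ENNReal.ofReal (Real.exp ((2 * n : ℕ) * ε))
        * (A 0 (Sset i)ᶜ + ((2 * n : ℕ) : ℝ≥0∞) * ENNReal.ofReal δ) with hCdef
      have hgood : ∀ x ∈ G, A x (Sset i)ᶜ ≤ C := by
        intro x hx
        apply aux_groupDP hdp (le_of_lt hεpos) _ (hBm i) (2 * n)
        have hxj : ∀ j, j ≠ i → x j = 0 := by
          intro j hj
          have := hx j (Set.mem_univ j)
          simp only [if_neg hj] at this
          exact this
        have hxi : x i ≤ 2 * n := by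
          have := hx i (Set.mem_univ i)
          simp only [if_pos rfl] at this
          exact this
        calc (∑ j, x j) = x i := by
              rw [Finset.sum_eq_single i]
              · intro j _ hj
                exact hxj j hj
              · intro hcon
                exact absurd (Finset.mem_univ i) hcon
          _ ≤ 2 * n := hxi
      have hub : ui ≤ C + 1 / 4 := by
        calc ui ≤ ∫⁻ x, (G.indicator (fun _ => C) x + Gᶜ.indicator (fun _ => 1) x) ∂μi := by
              rw [huidef]
              apply lintegral_mono
              intro x
              beta_reduce
              by_cases hx : x ∈ G
              · rw [Set.indicator_of_mem hx, Set.indicator_of_notMem (by simpa using hx)]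
                simpa using hgood x hx
              · rw [Set.indicator_of_notMem hx, Set.indicator_of_mem (by simpa using hx)]
                haveI := hAprob x
                simpa using prob_le_one
          _ = C * μi G + 1 * μi Gᶜ := by
              rw [lintegral_add_left (measurable_const.indicator (aux_measSet G)),
                lintegral_indicator_const (aux_measSet G), lintegral_indicator_const (aux_measSet Gᶜ)]
          _ ≤ C * 1 + 1 * (1 / 4) := by
              haveI : IsProbabilityMeasure μi := by rw [hμidef]; infer_instance
              gcongr
              · exact prob_le_one
          _ = C + 1 / 4 := by rw [mul_one, one_mul]
      have hC : (1 / 4 : ℝ≥0∞) ≤ C := aux_quarter_of (hui.trans hub)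
      -- convert to a real inequality
      have h2nε : ((2 * n : ℕ) : ℝ) * ε = L / 8 := by
        rw [hε]
        push_cast
        field_simp
        ring
      have hCreal : C = ENNReal.ofReal (D * (a i + ((2 * n : ℕ) : ℝ) * δ)) := by
        rw [hCdef, haeq i, ← ENNReal.ofReal_natCast (2 * n),
          ← ENNReal.ofReal_mul (by positivity),
          ← ENNReal.ofReal_add (ha0 i) (by positivity),
          ← ENNReal.ofReal_mul (by positivity), h2nε, hDdef]
      rw [hCreal, aux_ofReal_quarter] at hC
      exact (ENNReal.ofReal_le_ofReal_iff (by positivity)).mp hC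
    -- Step 2: the counting bound ∑ a i ≤ D
    have hstep2 : ∑ i, a i ≤ D := by
      have hBsub : ∀ i : Fin d, A 0 (Sset i)ᶜ ≤ A 0 ((Sset i)ᶜ ∩ simplex d) := by
        intro i
        have hc0 : A 0 (simplex d)ᶜ = 0 := by
          haveI := hAprob 0
          rw [measure_compl hsimpm (measure_ne_top _ _), measure_univ, hAsimp 0, tsub_self]
        calc A 0 (Sset i)ᶜ ≤ A 0 (((Sset i)ᶜ ∩ simplex d) ∪ (simplex d)ᶜ) := by
              apply measure_mono
              intro v hv
              by_cases hvs : v ∈ simplex d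
              · exact Or.inl ⟨hv, hvs⟩
              · exact Or.inr hvs
          _ ≤ A 0 ((Sset i)ᶜ ∩ simplex d) + A 0 (simplex d)ᶜ := measure_union_le _ _
          _ = A 0 ((Sset i)ᶜ ∩ simplex d) := by rw [hc0, add_zero]
      have hcnt : ∑ i, A 0 ((Sset i)ᶜ ∩ simplex d) ≤ ENNReal.ofReal D := by
        have hmeasi : ∀ i : Fin d, MeasurableSet ((Sset i)ᶜ ∩ simplex d) :=
          fun i => (hBm i).inter hsimpm
        have heq : ∀ i : Fin d, A 0 ((Sset i)ᶜ ∩ simplex d)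
            = ∫⁻ v, ((Sset i)ᶜ ∩ simplex d).indicator (fun _ => (1 : ℝ≥0∞)) v ∂(A 0) := by
          intro i
          rw [lintegral_indicator_const (hmeasi i), one_mul]
        calc ∑ i, A 0 ((Sset i)ᶜ ∩ simplex d)
            = ∫⁻ v, ∑ i, ((Sset i)ᶜ ∩ simplex d).indicator (fun _ => (1 : ℝ≥0∞)) v ∂(A 0) := by
              rw [lintegral_finset_sum _
                (fun i _ => measurable_const.indicator (hmeasi i))]
              exact Finset.sum_congr rfl fun i _ => heq i
          _ ≤ ∫⁻ v, (simplex d).indicator (fun _ => ENNReal.ofReal D) v ∂(A 0) := by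
              apply lintegral_mono
              intro v
              beta_reduce
              by_cases hv : v ∈ simplex d
              · rw [Set.indicator_of_mem hv]
                have hterm : ∀ i : Fin d, ((Sset i)ᶜ ∩ simplex d).indicator
                    (fun _ => (1 : ℝ≥0∞)) v = if v ∈ (Sset i)ᶜ then 1 else 0 := by
                  intro i
                  by_cases hvi : v ∈ (Sset i)ᶜ
                  · rw [Set.indicator_of_mem (Set.mem_inter hvi hv), if_pos hvi]
                  · rw [Set.indicator_of_notMem (fun hmem => hvi hmem.1), if_neg hvi]
                rw [Finset.sum_congr rfl (fun i _ => hterm i)]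
                rw [Finset.sum_boole]
                set F := Finset.univ.filter (fun i => v ∈ (Sset i)ᶜ) with hF
                have hcard : (F.card : ℝ) ≤ D := by
                  have hFc : ∀ i ∈ F, c' ≤ v i := by
                    intro i hi
                    have := (Finset.mem_filter.mp hi).2
                    simp only [Set.mem_compl_iff, hSsetdef, Set.mem_setOf_eq, not_le] at this
                    linarith
                  have h1 : (F.card : ℝ) * c' ≤ ∑ i ∈ F, v i := by
                    have hconst : (F.card : ℝ) * c' = ∑ _i ∈ F, c' := by
                      rw [Finset.sum_const, nsmul_eq_mul]
                    rw [hconst]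
                    exact Finset.sum_le_sum hFc
                  have h2 : ∑ i ∈ F, v i ≤ 1 := by
                    rw [← hv.2]
                    exact Finset.sum_le_sum_of_subset_of_nonneg (Finset.subset_univ F)
                      (fun i _ _ => hv.1 i)
                  have h3 : (F.card : ℝ) * c' ≤ 1 := h1.trans h2
                  have hinv : 1 / c' = D := by
                    rw [hc'def, hDdef, Real.exp_neg]
                    field_simp
                  calc (F.card : ℝ) = (F.card : ℝ) * c' / c' := by rw [mul_div_assoc, div_self (ne_of_gt hc'0), mul_one]
                    _ ≤ 1 / c' := by gcongr
                    _ = D := hinv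
                calc (F.card : ℝ≥0∞) = ENNReal.ofReal (F.card : ℝ) := by
                      rw [ENNReal.ofReal_natCast]
                  _ ≤ ENNReal.ofReal D := ENNReal.ofReal_le_ofReal hcard
              · rw [Set.indicator_of_notMem hv]
                rw [Finset.sum_eq_zero]
                intro i _
                exact Set.indicator_of_notMem (fun hmem => hv hmem.2) _
          _ = ENNReal.ofReal D := by
              rw [lintegral_indicator_const hsimpm, hAsimp 0, mul_one]
      have hfinal : ∑ i, A 0 (Sset i)ᶜ ≤ ENNReal.ofReal D :=
        (Finset.sum_le_sum fun i _ => hBsub i).trans hcnt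
      have := ENNReal.toReal_mono ENNReal.ofReal_ne_top hfinal
      rw [ENNReal.toReal_sum (fun i _ => hafin i), ENNReal.toReal_ofReal (le_of_lt hD0)] at this
      exact this
    -- Step 3: numeric contradiction
    set s : ℝ := ((2 * n : ℕ) : ℝ) * δ with hsdef
    have hs0 : 0 ≤ s := by positivity
    have hrpow : (d : ℝ) ^ ((1 : ℝ) / 4) = D ^ 2 := by
      rw [Real.rpow_def_of_pos hdpos, hDdef,
        show Real.log d * (1 / 4) = ((2 : ℕ) : ℝ) * (L / 8) by push_cast; ring,
        Real.exp_nat_mul]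
    have hsD : s * D ^ 2 ≤ 1 / 8 := by
      rw [hrpow, hε] at hδ
      have hδle : δ ≤ 1 / (16 * n * D ^ 2) := by
        have heq : (L / (16 * n)) / (D ^ 2 * L) = 1 / (16 * n * D ^ 2) := by
          field_simp
        calc δ ≤ (L / (16 * n)) / (D ^ 2 * L) := hδ
          _ = 1 / (16 * n * D ^ 2) := heq
      calc s * D ^ 2 = (2 * (n : ℝ)) * δ * D ^ 2 := by rw [hsdef]; push_cast; ring
        _ ≤ (2 * (n : ℝ)) * (1 / (16 * n * D ^ 2)) * D ^ 2 := by
            gcongr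
        _ = 1 / 8 := by field_simp; ring
    have hD8 : D ^ 8 = (d : ℝ) := by
      rw [hDdef, ← Real.exp_nat_mul,
        show ((8 : ℕ) : ℝ) * (L / 8) = L by push_cast; ring, hLdef, Real.exp_log hdpos]
    have hsum2 : (d : ℝ) / 4 ≤ D * ((∑ i, a i) + (d : ℝ) * s) := by
      have h1 : ∑ _i : Fin d, (1 / 4 : ℝ) ≤ ∑ i, D * (a i + s) :=
        Finset.sum_le_sum fun i _ => hstep1 i
      rw [Finset.sum_const, Finset.card_univ, Fintype.card_fin] at h1
      have h2 : ∑ i, D * (a i + s) = D * ((∑ i, a i) + (d : ℝ) * s) := by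
        rw [← Finset.mul_sum, Finset.sum_add_distrib, Finset.sum_const, Finset.card_univ,
          Fintype.card_fin, nsmul_eq_mul]
      rw [h2] at h1
      calc (d : ℝ) / 4 = (d : ℝ) • (1 / 4 : ℝ) := by
            rw [smul_eq_mul]; ring
        _ ≤ D * ((∑ i, a i) + (d : ℝ) * s) := by
            rw [← Nat.cast_smul_eq_nsmul ℝ] at h1
            exact h1
    have hsa0 : 0 ≤ ∑ i, a i := Finset.sum_nonneg fun i _ => ha0 i
    -- D^8/4 ≤ D^2 + D^7/8, contradiction with D^8 = d ≥ 16
    have hfin : D ^ 8 / 4 ≤ D ^ 2 + D ^ 7 / 8 := by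
      have hds : (d : ℝ) * s = D ^ 6 * (s * D ^ 2) := by
        rw [← hD8]; ring
      calc D ^ 8 / 4 = (d : ℝ) / 4 := by rw [hD8]
        _ ≤ D * ((∑ i, a i) + (d : ℝ) * s) := hsum2
        _ ≤ D * (D + D ^ 6 * (1 / 8)) := by
            rw [hds]
            gcongr
        _ = D ^ 2 + D ^ 7 / 8 := by ring
    have h16D : 16 ≤ D ^ 8 := by rw [hD8]; exact hd16
    exact aux_numeric D h16D hD0 hfin
end

section
/- (Two-point packing over two symbols.) Let d ≥ 2 be an integer and j_1 ≠ j_2 ∈ {1,…,d}. Let 0 ≤ Δ ≤ a ≤ 1 with Δ < a/2. Define p, p⁻ ∈ Δ(d) by p_{j_1} = a, p_{j_2} = 1 − a, p⁻_{j_1} = a − Δ, p⁻_{j_2} = 1 − a + Δ, and all other coordinates equal to 0. Then for every q ∈ Δ(d), KL(p‖q) ≥ Δ²/(8a) or KL(p⁻‖q) ≥ Δ²/(8a). -/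
open MeasureTheory ProbabilityTheory Real
open scoped ENNReal NNReal

/-- Binary KL divergence as a real function. -/
noncomputable def klR (x y : ℝ) : ℝ :=
  x * (Real.log x - Real.log y) + (1 - x) * (Real.log (1 - x) - Real.log (1 - y))

lemma klR_self (x : ℝ) : klR x x = 0 := by simp [klR]

lemma hasDerivAt_klR (x t : ℝ) (ht0 : 0 < t) (ht1 : t < 1) :
    HasDerivAt (fun s => klR x s) (-(x / t) + (1 - x) / (1 - t)) t := by
  have h1 : HasDerivAt (fun s : ℝ => Real.log x - Real.log s) (-t⁻¹) t := by
    simpa using (Real.hasDerivAt_log ht0.ne').const_sub (Real.log x)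
  have hinner : HasDerivAt (fun s : ℝ => 1 - s) (-1) t := by
    simpa using (hasDerivAt_id t).const_sub 1
  have h2 : HasDerivAt (fun s : ℝ => Real.log (1 - s)) (-(1 - t)⁻¹) t := by
    have := (Real.hasDerivAt_log (by intro h; linarith [(sub_eq_zero.mp h)] : (1:ℝ) - t ≠ 0)).comp t hinner
    simp at this
    exact this
  have h3 : HasDerivAt (fun s : ℝ => Real.log (1 - x) - Real.log (1 - s)) ((1 - t)⁻¹) t := by
    simpa using h2.const_sub (Real.log (1 - x))
  have H := (h1.const_mul x).add (h3.const_mul (1 - x))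
  have heq : x * -t⁻¹ + (1 - x) * (1 - t)⁻¹ = -(x / t) + (1 - x) / (1 - t) := by
    field_simp
  simp only [klR]
  exact heq ▸ H

lemma klR_low {x y : ℝ} (hy0 : 0 < y) (hyx : y ≤ x) (hx1 : x ≤ 1) :
    (x - y) ^ 2 / (2 * x) ≤ klR x y := by
  have hx0 : 0 < x := lt_of_lt_of_le hy0 hyx
  rcases hx1.lt_or_eq with hx1 | rfl
  · rcases hyx.lt_or_eq with hyx | rfl
    · -- derivative argument on Icc y x
      set H : ℝ → ℝ := fun t => klR x t - (x - t) ^ 2 / (2 * x) with hHdef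
      have key : ∀ t, 0 < t → t < 1 →
          HasDerivAt H ((-(x / t) + (1 - x) / (1 - t)) - 2 * (x - t) ^ 1 * -1 / (2 * x)) t := by
        intro t ht0 ht1
        have hG : HasDerivAt (fun t : ℝ => (x - t) ^ 2 / (2 * x)) (2 * (x - t) ^ 1 * -1 / (2 * x)) t := by
          have := (((hasDerivAt_id t).const_sub x).pow 2).div_const (2 * x)
          simpa using this
        exact (hasDerivAt_klR x t ht0 ht1).sub hG
      have hanti : AntitoneOn H (Set.Icc y x) := by
        apply antitoneOn_of_deriv_nonpos (convex_Icc y x)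
        · intro t ht
          exact (key t (lt_of_lt_of_le hy0 ht.1) (lt_of_le_of_lt ht.2 hx1)).continuousAt.continuousWithinAt
        · intro t ht
          rw [interior_Icc] at ht
          exact (key t (lt_trans hy0 ht.1) (lt_trans ht.2 hx1)).differentiableAt.differentiableWithinAt
        · intro t ht
          rw [interior_Icc] at ht
          have ht0 : 0 < t := lt_trans hy0 ht.1
          have ht1 : t < 1 := lt_trans ht.2 hx1
          rw [(key t ht0 ht1).deriv]
          have htne : t ≠ 0 := ht0.ne'
          have h1tne : (1:ℝ) - t ≠ 0 := by intro h; rw [sub_eq_zero] at h; exact absurd h.symm ht1.ne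
          have hxne : x ≠ 0 := hx0.ne'
          have hrw : (-(x / t) + (1 - x) / (1 - t)) - 2 * (x - t) ^ 1 * -1 / (2 * x)
              = ((x - t) * (t * (1 - t) - x)) / (x * (t * (1 - t))) := by
            field_simp
            ring
          rw [hrw]
          apply div_nonpos_of_nonpos_of_nonneg
          · apply mul_nonpos_of_nonneg_of_nonpos
            · nlinarith [ht.2]
            · nlinarith [ht.2, ht0, ht1]
          · have : (0:ℝ) < x * (t * (1 - t)) := by
              apply mul_pos hx0 (mul_pos ht0 (by linarith))
            exact this.le
      have h := hanti (Set.left_mem_Icc.mpr hyx.le) (Set.right_mem_Icc.mpr hyx.le) hyx.le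
      have hx : H x = 0 := by simp [hHdef, klR_self]
      have : 0 ≤ H y := by rw [← hx]; exact h
      simpa [hHdef] using this
    · simp [klR_self]
  · -- x = 1
    have : Real.log y ≤ y - 1 := Real.log_le_sub_one_of_pos hy0
    have h2 : klR 1 y = -Real.log y := by simp [klR]
    rw [h2]
    nlinarith [sq_nonneg (1 - y), mul_nonneg (by linarith : (0:ℝ) ≤ 1 - y) (by linarith : (0:ℝ) ≤ 1 + y)]

lemma klR_high {x y : ℝ} (hx0 : 0 < x) (hxy : x ≤ y) (hy1 : y < 1) :
    (y - x) ^ 2 / (2 * y) ≤ klR x y := by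
  rcases hxy.lt_or_eq with hxy | rfl
  · set H : ℝ → ℝ := fun t => klR x t - (t - x) ^ 2 / (2 * t) with hHdef
    have key : ∀ t, 0 < t → t < 1 →
        HasDerivAt H ((-(x / t) + (1 - x) / (1 - t))
          - (2 * (t - x) ^ 1 * 1 * (2 * t) - (t - x) ^ 2 * 2) / (2 * t) ^ 2) t := by
      intro t ht0 ht1
      have hnum : HasDerivAt (fun t : ℝ => (t - x) ^ 2) (2 * (t - x) ^ 1 * 1) t :=
        ((hasDerivAt_id t).sub_const x).pow 2
      have hden : HasDerivAt (fun t : ℝ => 2 * t) 2 t := by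
        simpa using (hasDerivAt_id t).const_mul 2
      have hG := hnum.div hden (by positivity)
      exact (hasDerivAt_klR x t ht0 ht1).sub hG
    have hmono : MonotoneOn H (Set.Icc x y) := by
      apply monotoneOn_of_deriv_nonneg (convex_Icc x y)
      · intro t ht
        exact (key t (lt_of_lt_of_le hx0 ht.1) (lt_of_le_of_lt ht.2 hy1)).continuousAt.continuousWithinAt
      · intro t ht
        rw [interior_Icc] at ht
        exact (key t (lt_trans hx0 ht.1) (lt_trans ht.2 hy1)).differentiableAt.differentiableWithinAt
      · intro t ht
        rw [interior_Icc] at ht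
        have ht0 : 0 < t := lt_trans hx0 ht.1
        have ht1 : t < 1 := lt_trans ht.2 hy1
        rw [(key t ht0 ht1).deriv]
        have htne : t ≠ 0 := ht0.ne'
        have h1tne : (1:ℝ) - t ≠ 0 := by intro h; rw [sub_eq_zero] at h; exact absurd h.symm ht1.ne
        have hrw : (-(x / t) + (1 - x) / (1 - t))
            - (2 * (t - x) ^ 1 * 1 * (2 * t) - (t - x) ^ 2 * 2) / (2 * t) ^ 2
            = ((t - x) * ((t - x) + t ^ 2 + x * t)) / (2 * t ^ 2 * (1 - t)) := by
          field_simp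
          ring
        rw [hrw]
        apply div_nonneg
        · have h1 : 0 ≤ t - x := by linarith [ht.1]
          nlinarith [ht0, hx0]
        · have : (0:ℝ) < 2 * t ^ 2 * (1 - t) := by
            apply mul_pos (by positivity) (by linarith)
          exact this.le
    have h := hmono (Set.left_mem_Icc.mpr hxy.le) (Set.right_mem_Icc.mpr hxy.le) hxy.le
    have hx : H x = 0 := by simp [hHdef, klR_self]
    have : 0 ≤ H y := by rw [← hx]; exact h
    simpa [hHdef] using this
  · simp [klR_self]

lemma sum_support_pair {d : ℕ} {j₁ j₂ : Fin d} (hj : j₁ ≠ j₂) (f : Fin d → ℝ)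
    (hf : ∀ j, j ≠ j₁ → j ≠ j₂ → f j = 0) : ∑ i, f i = f j₁ + f j₂ := by
  rw [← Finset.sum_pair hj]
  exact (Finset.sum_subset (Finset.subset_univ _) (fun i _ hi => by
    simp only [Finset.mem_insert, Finset.mem_singleton] at hi
    push_neg at hi
    exact hf i hi.1 hi.2)).symm

lemma klDiv_pair_ge {d : ℕ} {j₁ j₂ : Fin d} (hj : j₁ ≠ j₂) (x : ℝ) (q : Fin d → ℝ)
    (hx0 : 0 < x) (hx1 : x ≤ 1) (hq0 : ∀ i, 0 ≤ q i) (hq1 : ∑ i, q i = 1)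
    (r : ℝ) (hr : 0 < q j₁ → q j₁ < 1 → r ≤ klR x (q j₁))
    (hr1 : x = 1 → 0 < q j₁ → r ≤ klR x (q j₁)) :
    ENNReal.ofReal r ≤ klDiv (fun j => if j = j₁ then x else if j = j₂ then 1 - x else 0) q := by
  set p : Fin d → ℝ := fun j => if j = j₁ then x else if j = j₂ then 1 - x else 0 with hp
  rw [klDiv]
  split_ifs with hg
  · apply ENNReal.ofReal_le_ofReal
    have hpj1 : p j₁ = x := by simp [hp]
    have hpj2 : p j₂ = 1 - x := by simp [hp, hj.symm]
    set b := q j₁ with hb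
    set c := q j₂ with hc
    have hb0 : 0 < b := hg j₁ (by rw [hpj1]; exact hx0)
    have hbc : b + c ≤ 1 := by
      have h := Finset.sum_le_sum_of_subset_of_nonneg (Finset.subset_univ {j₁, j₂})
        (fun i _ _ => hq0 i)
      rw [Finset.sum_pair hj, hq1] at h
      exact h
    have hsum : (∑ i, if 0 < p i then p i * Real.log (p i / q i) else 0)
        = (if 0 < x then x * Real.log (x / b) else 0)
          + (if 0 < 1 - x then (1 - x) * Real.log ((1 - x) / c) else 0) := by
      rw [sum_support_pair hj _ (fun j h1 h2 => by simp [hp, h1, h2])]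
      rw [hpj1, hpj2]
    rw [hsum, if_pos hx0]
    rcases hx1.lt_or_eq with hx1' | hx1'
    · -- x < 1
      have hc0 : 0 < c := hg j₂ (by rw [hpj2]; linarith)
      have hb1 : b < 1 := by linarith
      have hkey : klR x b ≤ x * Real.log (x / b)
          + (if 0 < 1 - x then (1 - x) * Real.log ((1 - x) / c) else 0) := by
        rw [if_pos (by linarith : (0:ℝ) < 1 - x)]
        rw [klR, ← Real.log_div hx0.ne' hb0.ne',
          ← Real.log_div (by linarith : (1:ℝ) - x ≠ 0) (by linarith : (1:ℝ) - b ≠ 0)]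
        have hlog : Real.log ((1 - x) / (1 - b)) ≤ Real.log ((1 - x) / c) := by
          apply Real.log_le_log (div_pos (by linarith) (by linarith))
          apply div_le_div_of_nonneg_left (by linarith) hc0 (by linarith)
        nlinarith [hlog]
      exact le_trans (hr hb0 hb1) hkey
    · -- x = 1
      rw [if_neg (by rw [← hx1']; simp)]
      have hkey : klR x b ≤ x * Real.log (x / b) + 0 := by
        rw [klR, ← Real.log_div hx0.ne' hb0.ne', ← hx1']
        simp
      exact le_trans (hr1 hx1' hb0) hkey
  · exact le_top

/-- **Two-point packing over two symbols**: for the pair of distributions `p, p⁻`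
differing by `Δ` on two symbols, every `q ∈ Δ(d)` is at KL distance at least
`Δ²/(8a)` from `p` or from `p⁻`. -/
theorem two_symbol_packing
    (d : ℕ) (hd : 2 ≤ d) (j₁ j₂ : Fin d) (hj : j₁ ≠ j₂)
    (a Δ : ℝ) (h0 : 0 ≤ Δ) (hΔa : Δ ≤ a) (ha1 : a ≤ 1) (hΔ : Δ < a / 2) :
    ∀ q ∈ simplex d,
      ENNReal.ofReal (Δ ^ 2 / (8 * a)) ≤
        klDiv (fun j => if j = j₁ then a else if j = j₂ then 1 - a else 0) q ∨
      ENNReal.ofReal (Δ ^ 2 / (8 * a)) ≤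
        klDiv (fun j => if j = j₁ then a - Δ else if j = j₂ then 1 - a + Δ else 0) q := by
  intro q hq
  obtain ⟨hq0, hq1⟩ := hq
  have ha0 : 0 < a := by linarith
  rcases h0.lt_or_eq with hΔ0 | hΔ0
  swap
  · left
    rw [← hΔ0]
    simp
  rcases le_or_gt (q j₁) (a - Δ / 2) with hcase | hcase
  · left
    apply klDiv_pair_ge hj a q ha0 ha1 hq0 hq1
    · intro hb0 hb1
      refine le_trans ?_ (klR_low hb0 (by linarith) ha1)
      rw [div_le_div_iff₀ (by linarith) (by linarith)]
      nlinarith [mul_nonneg ha0.le (mul_nonneg (by linarith : (0:ℝ) ≤ a - q j₁ - Δ / 2)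
        (by linarith : (0:ℝ) ≤ a - q j₁ + Δ / 2))]
    · intro _ hb0
      refine le_trans ?_ (klR_low hb0 (by linarith) ha1)
      rw [div_le_div_iff₀ (by linarith) (by linarith)]
      nlinarith [mul_nonneg ha0.le (mul_nonneg (by linarith : (0:ℝ) ≤ a - q j₁ - Δ / 2)
        (by linarith : (0:ℝ) ≤ a - q j₁ + Δ / 2))]
  · right
    have hu0 : 0 < a - Δ := by linarith
    have key : ∀ hb0 : 0 < q j₁, q j₁ < 1 → Δ ^ 2 / (8 * a) ≤ klR (a - Δ) (q j₁) := by
      intro hb0 hb1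
      refine le_trans ?_ (klR_high hu0 (by linarith) hb1)
      rw [div_le_div_iff₀ (by linarith) (by linarith)]
      nlinarith [mul_nonneg (mul_nonneg ha0.le
          (by linarith : (0:ℝ) ≤ q j₁ - (a - Δ) - Δ / 2))
          (by linarith : (0:ℝ) ≤ q j₁ - (a - Δ)),
        mul_nonneg hΔ0.le (mul_nonneg (by linarith : (0:ℝ) ≤ q j₁ - (a - Δ / 2))
          (by linarith : (0:ℝ) ≤ 2 * a - Δ)),
        pow_pos hΔ0 3]
    have heq : (fun j => if j = j₁ then a - Δ else if j = j₂ then 1 - a + Δ else 0)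
        = (fun j => if j = j₁ then a - Δ else if j = j₂ then 1 - (a - Δ) else 0) := by
      funext j; split_ifs <;> ring
    rw [heq]
    apply klDiv_pair_ge hj (a - Δ) q hu0 (by linarith) hq0 hq1
    · exact key
    · intro hx1 hb0
      -- a - Δ = 1 impossible since a ≤ 1 and Δ > 0
      exfalso; linarith
end

section
/- (Dirac distribution packing over κ symbols.) Let d, κ ∈ ℕ with κ ≥ 2 and let j_1,…,j_κ ∈ {1,…,d} be distinct. For l ∈ {1,…,κ} let p^l ∈ Δ(d) be the point mass at j_l. Then for every q ∈ Δ(d), #{ l ∈ {1,…,κ} : KL(p^l‖q) ≥ ln(1 + κ/4) } ≥ κ/2. -/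
open MeasureTheory ProbabilityTheory Real
open scoped ENNReal NNReal Classical

/-- **Dirac distribution packing over `κ` symbols**: for point masses `p^l` at `κ ≥ 2`
distinct symbols, every `q ∈ Δ(d)` is at KL distance at least `ln(1 + κ/4)` from at
least half of them. -/
theorem dirac_packing
    (d κ : ℕ) (hκ : 2 ≤ κ) (j : Fin κ → Fin d) (hj : Function.Injective j) :
    ∀ q ∈ simplex d,
      (κ : ℝ) / 2 ≤
        ((Finset.univ.filter fun l : Fin κ =>
          ENNReal.ofReal (Real.log (1 + (κ : ℝ) / 4)) ≤
            klDiv (fun i => if i = j l then (1 : ℝ) else 0) q).card : ℝ) := by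
  intro q hq
  obtain ⟨hq0, hq1⟩ := hq
  have hκpos : (0:ℝ) < κ := by positivity
  have hone : (1:ℝ) < 1 + (κ:ℝ)/4 := by linarith
  have honepos : (0:ℝ) < 1 + (κ:ℝ)/4 := by linarith
  set c : ℝ := (1 + (κ:ℝ)/4)⁻¹ with hc
  have hcpos : 0 < c := by positivity
  have hL : 0 < Real.log (1 + (κ:ℝ)/4) := Real.log_pos hone
  -- characterize membership
  have hmem : ∀ l : Fin κ,
      (ENNReal.ofReal (Real.log (1 + (κ:ℝ)/4)) ≤
        klDiv (fun i => if i = j l then (1:ℝ) else 0) q) ↔ q (j l) ≤ c := by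
    intro l
    set a := j l
    by_cases hx : 0 < q a
    · have hcond : ∀ i, 0 < (if i = a then (1:ℝ) else 0) → 0 < q i := by
        intro i hi
        by_cases h : i = a
        · subst h; exact hx
        · simp [h] at hi
      have hsum : (∑ i, if 0 < (if i = a then (1:ℝ) else 0) then
          (if i = a then (1:ℝ) else 0) * Real.log ((if i = a then (1:ℝ) else 0) / q i) else 0)
          = Real.log (q a)⁻¹ := by
        rw [Finset.sum_eq_single_of_mem a (Finset.mem_univ a)]
        · simp [one_div]
        · intro i _ h; simp [h]
      have hkl : klDiv (fun i => if i = a then (1:ℝ) else 0) q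
          = ENNReal.ofReal (Real.log (q a)⁻¹) := by
        rw [klDiv, if_pos hcond, hsum]
      rw [hkl]
      constructor
      · intro h
        by_cases hy : 0 ≤ Real.log (q a)⁻¹
        · have := (ENNReal.ofReal_le_ofReal_iff hy).mp h
          have h2 : Real.log c⁻¹ ≤ Real.log (q a)⁻¹ := by
            rwa [hc, inv_inv]
          have h3 : c⁻¹ ≤ (q a)⁻¹ :=
            (Real.log_le_log_iff (by positivity) (by positivity)).mp h2
          have h4 := inv_anti₀ (by positivity : (0:ℝ) < c⁻¹) h3
          rwa [inv_inv, inv_inv] at h4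
        · exfalso
          push_neg at hy
          have : ENNReal.ofReal (Real.log (q a)⁻¹) = 0 := by
            exact ENNReal.ofReal_eq_zero.mpr (le_of_lt hy)
          rw [this, nonpos_iff_eq_zero, ENNReal.ofReal_eq_zero] at h
          linarith
      · intro h
        apply ENNReal.ofReal_le_ofReal
        have h3 : c⁻¹ ≤ (q a)⁻¹ := by
          exact inv_anti₀ hx h
        have := Real.log_le_log (by positivity) h3
        rwa [hc, inv_inv] at this
    · have hcfail : ¬ ∀ i, 0 < (if i = a then (1:ℝ) else 0) → 0 < q i := by
        push_neg
        exact ⟨a, by simp, not_lt.mp hx⟩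
      have hkl : klDiv (fun i => if i = a then (1:ℝ) else 0) q = ⊤ := by
        rw [klDiv, if_neg hcfail]
      simp only [hkl]
      constructor
      · intro _
        have : q a = 0 := le_antisymm (not_lt.mp hx) (hq0 a)
        rw [this]; exact le_of_lt hcpos
      · intro _; exact le_top
  set B := Finset.univ.filter (fun l : Fin κ => c < q (j l)) with hB
  have hfilter : (Finset.univ.filter fun l : Fin κ =>
      ENNReal.ofReal (Real.log (1 + (κ:ℝ)/4)) ≤
        klDiv (fun i => if i = j l then (1:ℝ) else 0) q) = Bᶜ := by
    rw [hB, Finset.compl_filter]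
    apply Finset.filter_congr
    intro l _
    rw [hmem l, not_lt]
  rw [hfilter]
  -- bound card B
  have hsumB : (B.card : ℝ) * c ≤ 1 := by
    have h1 : (B.card : ℝ) * c ≤ ∑ l ∈ B, q (j l) := by
      have := Finset.card_nsmul_le_sum B (fun l => q (j l)) c
        (fun l hl => le_of_lt (Finset.mem_filter.mp hl).2)
      simpa [nsmul_eq_mul] using this
    have h2 : ∑ l ∈ B, q (j l) = ∑ i ∈ B.image j, q i := by
      rw [Finset.sum_image (fun x _ y _ h => hj h)]
    have h3 : ∑ i ∈ B.image j, q i ≤ ∑ i, q i :=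
      Finset.sum_le_sum_of_subset_of_nonneg (Finset.subset_univ _)
        (fun i _ _ => hq0 i)
    linarith [hq1 ▸ h3, h2 ▸ h1]
  have hreal : (4:ℝ) * B.card ≤ (κ:ℝ) + 4 := by
    have : (B.card : ℝ) ≤ 1 + (κ:ℝ)/4 := by
      rw [hc] at hsumB
      calc (B.card : ℝ) = (B.card : ℝ) * (1 + (κ:ℝ)/4)⁻¹ * (1 + (κ:ℝ)/4) := by
            field_simp
        _ ≤ 1 * (1 + (κ:ℝ)/4) := by
            apply mul_le_mul_of_nonneg_right hsumB (le_of_lt honepos)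
        _ = 1 + (κ:ℝ)/4 := one_mul _
    linarith
  have hnat : 4 * B.card ≤ κ + 4 := by exact_mod_cast hreal
  have hhalf : 2 * B.card ≤ κ := by omega
  have hBle : B.card ≤ κ := by omega
  have hcompl : (Bᶜ.card : ℝ) = (κ:ℝ) - B.card := by
    rw [Finset.card_compl, Fintype.card_fin]
    push_cast [Nat.cast_sub hBle]
    ring
  rw [hcompl]
  have : (2 * B.card : ℝ) ≤ (κ:ℝ) := by exact_mod_cast hhalf
  linarith
end

section
/- (Probability of a small symbol exceeding the noisy threshold.) There exists a universal constant C > 0 such that the following holds. Let m ≥ 1 be an integer, p > 0, τ > 0, ε > 0, let x be a Poisson random variable with mean m·p, and let z ∼ Lap(0, 1/ε) be independent of x. If p ≤ 1/(m·min{ε, 1}), then Pr[ x + z ≥ τ/min{ε, 1} ] ≤ C·e^{−τ/2}. -/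
open MeasureTheory ProbabilityTheory Real
open scoped ENNReal NNReal

/-- The Laplace distribution `Lap(0, b)` on `ℝ`, with density `z ↦ exp(−|z|/b)/(2b)`. -/
noncomputable def laplaceMeasure (b : ℝ) : Measure ℝ :=
  volume.withDensity fun z => ENNReal.ofReal ((1 / (2 * b)) * Real.exp (-|z| / b))

section Aux

open Set
open scoped Nat

lemma lap_integrableOn_Ioi {b : ℝ} (hb : 0 < b) (u : ℝ) (hu : 0 ≤ u) :
    IntegrableOn (fun z : ℝ => (1 / (2 * b)) * Real.exp (-|z| / b)) (Ioi u) := by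
  have h : IntegrableOn (fun z : ℝ => (1 / (2 * b)) * Real.exp (-(1/b) * z)) (Ioi u) :=
    ((exp_neg_integrableOn_Ioi u (show (0:ℝ) < 1/b by positivity)).const_mul (1 / (2 * b)))
  refine h.congr_fun (fun z hz => ?_) measurableSet_Ioi
  rw [abs_of_nonneg (le_trans hu (le_of_lt hz))]
  ring_nf

lemma lap_tail {b u : ℝ} (hb : 0 < b) (hu : 0 ≤ u) :
    laplaceMeasure b {z : ℝ | u ≤ z} = ENNReal.ofReal ((1/2) * Real.exp (-u / b)) := by
  have hset : {z : ℝ | u ≤ z} = Ici u := rfl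
  rw [laplaceMeasure, hset, withDensity_apply _ measurableSet_Ici,
    ← MeasureTheory.restrict_Ioi_eq_restrict_Ici,
    ← ofReal_integral_eq_lintegral_ofReal (lap_integrableOn_Ioi hb u hu)
      (Filter.Eventually.of_forall fun z => by positivity)]
  congr 1
  have h1 : ∀ z ∈ Ioi u, (1 / (2 * b)) * Real.exp (-|z| / b)
      = (1 / (2 * b)) * Real.exp (-(1/b * z)) := by
    intro z hz
    rw [abs_of_nonneg (le_trans hu (le_of_lt hz))]
    ring_nf
  rw [setIntegral_congr_fun measurableSet_Ioi h1, integral_const_mul]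
  have h2 : ∫ z in Ioi u, Real.exp (-(1/b * z))
      = (1/b)⁻¹ • ∫ x in Ioi (1/b * u), Real.exp (-x) :=
    integral_comp_mul_left_Ioi (fun x => Real.exp (-x)) u (by positivity)
  rw [h2, integral_exp_neg_Ioi]
  rw [smul_eq_mul]
  have hb' : b ≠ 0 := ne_of_gt hb
  field_simp

lemma lap_iic {b : ℝ} (hb : 0 < b) :
    laplaceMeasure b (Iic 0) = ENNReal.ofReal (1/2) := by
  have m : MeasurableEmbedding fun x : ℝ => -x := (Homeomorph.neg ℝ).measurableEmbedding
  have int_Ioi : IntegrableOn (fun z : ℝ => (1 / (2 * b)) * Real.exp (-|z| / b)) (Ioi 0) :=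
    lap_integrableOn_Ioi hb 0 le_rfl
  have int_Iic : IntegrableOn (fun z : ℝ => (1 / (2 * b)) * Real.exp (-|z| / b)) (Iic 0) := by
    rw [← Measure.map_neg_eq_self (volume : Measure ℝ)]
    rw [m.integrableOn_map_iff]
    simp_rw [Function.comp_def, abs_neg, neg_preimage, neg_Iic, neg_zero]
    exact Iff.mpr integrableOn_Ici_iff_integrableOn_Ioi int_Ioi
  rw [laplaceMeasure, withDensity_apply _ measurableSet_Iic,
    ← ofReal_integral_eq_lintegral_ofReal int_Iic
      (Filter.Eventually.of_forall fun z => by positivity)]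
  have hI : ∫ z in Iic 0, (1 / (2 * b)) * Real.exp (-|z| / b)
      = ∫ z in Ioi 0, (1 / (2 * b)) * Real.exp (-|z| / b) := by
    rw [show (Ioi (0:ℝ)) = Ioi (-(0:ℝ)) by norm_num,
      ← integral_comp_neg_Iic (0:ℝ) (fun z => (1 / (2 * b)) * Real.exp (-|z| / b))]
    simp [abs_neg]
  rw [hI]
  have h1 : ∀ z ∈ Ioi (0:ℝ), (1 / (2 * b)) * Real.exp (-|z| / b)
      = (1 / (2 * b)) * Real.exp (-(1/b * z)) := by
    intro z hz
    rw [abs_of_nonneg (le_of_lt hz)]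
    ring_nf
  rw [setIntegral_congr_fun measurableSet_Ioi h1, integral_const_mul]
  have h2 : ∫ z in Ioi (0:ℝ), Real.exp (-(1/b * z))
      = (1/b)⁻¹ • ∫ x in Ioi (1/b * 0), Real.exp (-x) :=
    integral_comp_mul_left_Ioi (fun x => Real.exp (-x)) 0 (by positivity)
  rw [h2, integral_exp_neg_Ioi, smul_eq_mul]
  have hb' : b ≠ 0 := ne_of_gt hb
  rw [mul_zero, neg_zero, Real.exp_zero]
  field_simp

lemma lap_univ {b : ℝ} (hb : 0 < b) : laplaceMeasure b Set.univ ≤ 1 := by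
  have : (Set.univ : Set ℝ) = Iic 0 ∪ Ioi 0 := (Iic_union_Ioi).symm
  rw [this]
  refine le_trans (measure_union_le _ _) ?_
  have h1 := lap_iic hb
  have h2 : laplaceMeasure b (Ioi 0) ≤ ENNReal.ofReal (1/2) := by
    have : (Ioi (0:ℝ)) ⊆ {z : ℝ | 0 ≤ z} := fun z hz => show 0 ≤ z from le_of_lt (Set.mem_Ioi.mp hz)
    refine le_trans (measure_mono this) ?_
    rw [lap_tail hb le_rfl]
    simp
  rw [h1]
  calc ENNReal.ofReal (1/2) + laplaceMeasure b (Ioi 0)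
      ≤ ENNReal.ofReal (1/2) + ENNReal.ofReal (1/2) := by gcongr
    _ = 1 := by rw [← ENNReal.ofReal_add (by norm_num) (by norm_num)]; norm_num

lemma poisson_tail (r : ℝ≥0) (k : ℕ) :
    poissonMeasure r {n : ℕ | k ≤ n}
      ≤ ENNReal.ofReal (Real.exp ((r : ℝ) * (Real.exp 1 - 1) - k)) := by
  have hmeas : MeasurableSet {n : ℕ | k ≤ n} := trivial
  have hrepr : poissonMeasure r {n : ℕ | k ≤ n}
      = ∑' n, {n : ℕ | k ≤ n}.indicator (fun n => ENNReal.ofReal (poissonPMFReal r n)) n := by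
    rw [poissonMeasure, Measure.sum_apply _ hmeas]
    congr 1; funext n
    rw [Measure.smul_apply, Measure.dirac_apply' _ hmeas, smul_eq_mul]
    by_cases hn : k ≤ n <;> simp [Set.indicator, hn, poissonPMFReal]
  rw [hrepr]
  have hsum : Summable (fun n : ℕ => Real.exp (-(r:ℝ) - k) * (((r:ℝ) * Real.exp 1) ^ n / n !)) :=
    (Real.summable_pow_div_factorial _).mul_left _
  have hbound : ∀ n : ℕ, {n : ℕ | k ≤ n}.indicator (fun n => ENNReal.ofReal (poissonPMFReal r n)) n
      ≤ ENNReal.ofReal (Real.exp (-(r:ℝ) - k) * (((r:ℝ) * Real.exp 1) ^ n / n !)) := by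
    intro n
    by_cases hn : n ∈ {n : ℕ | k ≤ n}
    · rw [Set.indicator_of_mem hn]
      have : (fun n => ENNReal.ofReal (poissonPMFReal r n)) n = ENNReal.ofReal (poissonPMFReal r n) := rfl
      show ENNReal.ofReal (poissonPMFReal r n) ≤ _
      apply ENNReal.ofReal_le_ofReal
      rw [poissonPMFReal]
      rw [mul_pow, mul_div_assoc, mul_div_assoc, ← mul_assoc]
      have hk : (k:ℝ) ≤ (n:ℝ) := Nat.cast_le.mpr hn
      have h1 : Real.exp (-(r:ℝ)) ≤ Real.exp (-(r:ℝ) - k) * Real.exp 1 ^ n := by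
        rw [← Real.exp_nat_mul, ← Real.exp_add]
        apply Real.exp_le_exp.mpr
        linarith
      have h2 : (0:ℝ) ≤ (r:ℝ) ^ n / n ! := by positivity
      calc Real.exp (-(r:ℝ)) * ((r:ℝ) ^ n / n !)
          ≤ (Real.exp (-(r:ℝ) - k) * Real.exp 1 ^ n) * ((r:ℝ) ^ n / n !) :=
            mul_le_mul_of_nonneg_right h1 h2
        _ = Real.exp (-(r:ℝ) - k) * (r:ℝ) ^ n * (Real.exp 1 ^ n / n !) := by ring
    · rw [Set.indicator_of_notMem hn]
      exact zero_le
  calc (∑' n, {n : ℕ | k ≤ n}.indicator (fun n => ENNReal.ofReal (poissonPMFReal r n)) n)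
      ≤ ∑' n, ENNReal.ofReal (Real.exp (-(r:ℝ) - k) * (((r:ℝ) * Real.exp 1) ^ n / n !)) :=
        ENNReal.tsum_le_tsum hbound
    _ = ENNReal.ofReal (∑' n, Real.exp (-(r:ℝ) - k) * (((r:ℝ) * Real.exp 1) ^ n / n !)) := by
        rw [← ENNReal.ofReal_tsum_of_nonneg (fun n => by positivity) hsum]
    _ = ENNReal.ofReal (Real.exp ((r : ℝ) * (Real.exp 1 - 1) - k)) := by
        congr 1
        rw [tsum_mul_left]
        have h3 := (NormedSpace.expSeries_div_hasSum_exp ((r:ℝ) * Real.exp 1)).tsum_eq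
        rw [← Real.exp_eq_exp_ℝ] at h3
        rw [h3, ← Real.exp_add]
        ring_nf

end Aux

/-- **Probability of a small symbol exceeding the noisy threshold**: there is a
universal constant `C > 0` such that if `x ∼ Poi(m·p)` and `z ∼ Lap(0, 1/ε)` are
independent and `p ≤ 1/(m·min{ε,1})`, then
`Pr[x + z ≥ τ/min{ε,1}] ≤ C·e^{−τ/2}`. -/
theorem small_symbol_above_threshold :
    ∃ C : ℝ, 0 < C ∧
      ∀ (m : ℕ), 1 ≤ m → ∀ (p τ ε : ℝ), 0 < p → 0 < τ → 0 < ε →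
        p ≤ 1 / ((m : ℝ) * min ε 1) →
        ((poissonMeasure ((m : ℝ) * p).toNNReal).prod (laplaceMeasure (1 / ε)))
            {ω : ℕ × ℝ | τ / min ε 1 ≤ (ω.1 : ℝ) + ω.2}
          ≤ ENNReal.ofReal (C * Real.exp (-τ / 2)) := by
  refine ⟨Real.exp 3 + 1, by positivity, ?_⟩
  intro m hm p τ ε hp hτ hε hple
  set a := min ε 1 with ha
  have ha0 : 0 < a := lt_min hε one_pos
  have ha1 : a ≤ 1 := min_le_right _ _
  have haε : a ≤ ε := min_le_left _ _
  have hm1 : (1:ℝ) ≤ (m:ℝ) := by exact_mod_cast hm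
  have hb : (0:ℝ) < 1/ε := by positivity
  haveI : IsFiniteMeasure (laplaceMeasure (1/ε)) :=
    ⟨lt_of_le_of_lt (lap_univ hb) ENNReal.one_lt_top⟩
  set r : ℝ≥0 := ((m:ℝ) * p).toNNReal with hrdef
  have hrr : (r:ℝ) = (m:ℝ) * p := Real.coe_toNNReal _ (by positivity)
  have hr_le : (r:ℝ) ≤ 1 / a := by
    rw [hrr, le_div_iff₀ ha0]
    have hma : (0:ℝ) < (m:ℝ) * a := by positivity
    have h := (le_div_iff₀ hma).mp hple
    nlinarith
  set k : ℕ := ⌈τ / a / 2⌉₊ with hkdef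
  have hk_ge : τ / a / 2 ≤ (k:ℝ) := Nat.le_ceil _
  have htau2 : (0:ℝ) ≤ τ / a / 2 := by positivity
  have hsub : {ω : ℕ × ℝ | τ / a ≤ (ω.1:ℝ) + ω.2}
      ⊆ ({n : ℕ | k ≤ n} ×ˢ Set.univ) ∪ (Set.univ ×ˢ {z : ℝ | τ / a / 2 ≤ z}) := by
    rintro ⟨n, z⟩ hω
    simp only [Set.mem_setOf_eq] at hω
    by_cases hz : τ / a / 2 ≤ z
    · exact Or.inr ⟨Set.mem_univ _, hz⟩
    · push_neg at hz
      have hcl : τ / a / 2 ≤ (n:ℝ) := by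
        have : τ / a = τ / a / 2 + τ / a / 2 := by ring
        linarith
      exact Or.inl ⟨Nat.ceil_le.mpr hcl, Set.mem_univ _⟩
  refine le_trans (measure_mono hsub) ?_
  refine le_trans (measure_union_le _ _) ?_
  rw [Measure.prod_prod, Measure.prod_prod]
  have hP : poissonMeasure r {n : ℕ | k ≤ n}
      ≤ ENNReal.ofReal (Real.exp 3 * Real.exp (-τ/2)) := by
    rw [← Real.exp_add]
    by_cases hcase : 2 * Real.exp 1 ≤ τ
    · refine le_trans (poisson_tail r k) (ENNReal.ofReal_le_ofReal ?_)
      apply Real.exp_le_exp.mpr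
      have he1 : Real.exp 1 < 2.7182818286 := Real.exp_one_lt_d9
      have he2 : (1:ℝ) < Real.exp 1 := by linarith [Real.exp_one_gt_d9]
      have h1 : (r:ℝ) * (Real.exp 1 - 1) ≤ (1/a) * (Real.exp 1 - 1) := by
        apply mul_le_mul_of_nonneg_right hr_le; linarith
      have hk' : (1/a) * (τ/2) ≤ (k:ℝ) := by
        rw [show (1/a) * (τ/2) = τ / a / 2 by ring]; exact hk_ge
      have h4 : (r:ℝ) * (Real.exp 1 - 1) - (k:ℝ) ≤ (1/a) * ((Real.exp 1 - 1) - τ/2) := by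
        rw [mul_sub]; linarith
      have h3 : (1/a) * ((Real.exp 1 - 1) - τ/2) ≤ (Real.exp 1 - 1) - τ/2 := by
        have hneg : (Real.exp 1 - 1) - τ/2 ≤ -1 := by linarith
        have hone : (1:ℝ) ≤ 1/a := by rw [le_div_iff₀ ha0]; linarith
        nlinarith
      linarith
    · push_neg at hcase
      have hle1 : poissonMeasure r {n : ℕ | k ≤ n} ≤ 1 := prob_le_one
      refine le_trans hle1 ?_
      rw [ENNReal.one_le_ofReal, ← Real.exp_zero]
      apply Real.exp_le_exp.mpr
      have he1 : Real.exp 1 < 2.7182818286 := Real.exp_one_lt_d9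
      linarith
  have hL : laplaceMeasure (1/ε) {z : ℝ | τ / a / 2 ≤ z}
      ≤ ENNReal.ofReal (1 * Real.exp (-τ/2)) := by
    rw [lap_tail hb htau2]
    apply ENNReal.ofReal_le_ofReal
    have hexp : Real.exp (-(τ / a / 2) / (1/ε)) ≤ Real.exp (-τ/2) := by
      apply Real.exp_le_exp.mpr
      rw [div_div_eq_mul_div, div_one, neg_mul]
      have h5 : τ / a / 2 * a ≤ τ / a / 2 * ε := by
        apply mul_le_mul_of_nonneg_left haε htau2
      have h6 : τ / a / 2 * a = τ / 2 := by field_simp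
      have h7 : -τ / 2 = -(τ/2) := by ring
      rw [h7]
      linarith
    nlinarith [Real.exp_pos (-τ/2), hexp]
  calc poissonMeasure r {n : ℕ | k ≤ n} * laplaceMeasure (1/ε) Set.univ
        + poissonMeasure r Set.univ * laplaceMeasure (1/ε) {z : ℝ | τ / a / 2 ≤ z}
      ≤ ENNReal.ofReal (Real.exp 3 * Real.exp (-τ/2)) * 1
        + 1 * ENNReal.ofReal (1 * Real.exp (-τ/2)) := by
        gcongr
        all_goals first
          | exact lap_univ hb
          | exact le_of_eq measure_univ
          | exact hP
          | exact hL
    _ = ENNReal.ofReal ((Real.exp 3 + 1) * Real.exp (-τ/2)) := by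
        rw [mul_one, one_mul, ← ENNReal.ofReal_add (by positivity) (by positivity)]
        congr 1
        ring
    _ ≤ ENNReal.ofReal ((Real.exp 3 + 1) * Real.exp (-τ/2)) := le_rfl
end
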